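/- arXiv:2309.13341 — 8 statements merged into one kernel-verified Lean document; each statement's English description precedes it below -/
import Mathlib

section
/- Let F be a field of characteristic p > 0, r ≥ 1, and a₁,…,a_r ∈ F such that the r-fold quasi-Pfister form π = ⟪a₁,…,a_r⟫ is anisotropic over F. Inside a fixed algebraic closure of F let αᵢ satisfy αᵢ^p = aᵢ, and set K = F(α₁,…,α_r). Then for every diagonal quasilinear p-form φ = ⟨c₁,…,c_m⟩ anisotropic over F, i_d((φ ⊗ π)_F) = p^r · i_d(φ_K), where φ ⊗ π is the diagonal form of dimension m·p^r with coefficients c_j · a₁^{i₁}···a_r^{i_r} for all 1 ≤ j ≤ m and all tuples (i₁,…,i_r) with 0 ≤ i_t ≤ p−1. -/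
/-!
The monomials `α^i = ∏ αₜ^{iₜ}` (`0 ≤ iₜ < p`) have `p`-th powers equal to the coefficients of `π`,
so the `p`-th power of an `F`-linear relation among them is an isotropic vector of `π`. Hence they
are linearly independent, and since `[K : F] ≤ p^r` they form an `F`-basis of `K`. Writing each
`xⱼ ∈ K` in this basis turns `φ_K(x) = ∑ cⱼ xⱼ^p` into `(φ ⊗ π)` evaluated at the coordinates, an
`F`-linear isomorphism between the zero set of `φ ⊗ π` and the zero set of `φ_K` regarded over `F`,
whose `F`-dimension is `[K : F] · i_d(φ_K)`.
-/

open scoped BigOperators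

set_option synthInstance.maxHeartbeats 1000000
set_option maxHeartbeats 1000000

/-- The subfield `F^p` of `p`-th powers of `F` (generated as a subfield). -/
def pPow (p : ℕ) (F : Type*) [Field F] : Subfield F :=
  Subfield.closure (Set.range fun x : F => x ^ p)

/-- The degree `[F^p(S) : F^p]`. -/
noncomputable def pDeg (p : ℕ) {F : Type*} [Field F] (S : Set F) : ℕ :=
  Module.finrank ↥(pPow p F) ↥(IntermediateField.adjoin ↥(pPow p F) S)

/-- A finite family `a : ι → F` is `p`-independent over `F` if
`[F^p(a i, i : ι) : F^p] = p ^ #ι`. -/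
def pIndep (p : ℕ) {F : Type*} [Field F] {ι : Type*} [Fintype ι] (a : ι → F) : Prop :=
  pDeg p (Set.range a) = p ^ Fintype.card ι

/-- The defect `i_d(φ_E)` of the diagonal quasilinear `p`-form with coefficients `a` over `E`:
the `E`-dimension of its zero set (an `E`-subspace in characteristic `p`). -/
noncomputable def defect (p : ℕ) (E : Type*) [Field E] {ι : Type*} [Fintype ι] (a : ι → E) : ℕ :=
  Module.finrank E ↥(Submodule.span E {x : ι → E | ∑ i, a i * x i ^ p = 0})

/-- A diagonal quasilinear `p`-form is anisotropic over `E`. -/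
def Anisotropic (p : ℕ) (E : Type*) [Field E] {ι : Type*} [Fintype ι] (a : ι → E) : Prop :=
  ∀ x : ι → E, ∑ i, a i * x i ^ p = 0 → x = 0

/-- The value set `D_E(φ)` of a diagonal quasilinear `p`-form. -/
def valueSet (p : ℕ) (E : Type*) [Field E] {ι : Type*} [Fintype ι] (a : ι → E) : Set E :=
  {y | ∃ x : ι → E, y = ∑ i, a i * x i ^ p}

open Module IntermediateField

section ZeroSubmodule

variable (p : ℕ) [Fact p.Prime] (E : Type*) [Field E] [CharP E p] {ι : Type*} [Fintype ι]

def zeroSubmodule (a : ι → E) : Submodule E (ι → E) where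
  carrier := {x | ∑ i, a i * x i ^ p = 0}
  zero_mem' := by simp [zero_pow (Fact.out : p.Prime).ne_zero]
  add_mem' {x y} hx hy := by
    simp only [Set.mem_ofPred_eq, Pi.add_apply, add_pow_char, mul_add, Finset.sum_add_distrib] at *
    rw [hx, hy, add_zero]
  smul_mem' t x hx := by
    simp only [Set.mem_ofPred_eq, Pi.smul_apply, smul_eq_mul, mul_pow, mul_left_comm _ (t ^ p),
      ← Finset.mul_sum] at *
    rw [hx, mul_zero]

@[simp]
theorem mem_zeroSubmodule (a x : ι → E) : x ∈ zeroSubmodule p E a ↔ ∑ i, a i * x i ^ p = 0 :=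
  Iff.rfl

theorem defect_eq_finrank_zeroSubmodule (a : ι → E) :
    defect p E a = finrank E (zeroSubmodule p E a) := by
  rw [defect, ← Submodule.span_eq (zeroSubmodule p E a)]
  rfl

end ZeroSubmodule

section Transfer

variable {p : ℕ} [Fact p.Prime] {F K : Type*} [Field F] [Field K] [Algebra F K] [CharP K p]
  {ι : Type*} [Fintype ι] {b : ι → K} {d : ι → F}

theorem pow_sum_smul_of_pow_eq_algebraMap (hb : ∀ i, b i ^ p = algebraMap F K (d i))
    (y : ι → F) : (∑ i, y i • b i) ^ p = algebraMap F K (∑ i, d i * y i ^ p) := by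
  simp only [sum_pow_char, map_sum, map_mul, map_pow, Algebra.smul_def, mul_pow, hb, mul_comm]

theorem linearIndependent_of_anisotropic (hd : Anisotropic p F d)
    (hb : ∀ i, b i ^ p = algebraMap F K (d i)) : LinearIndependent F b := by
  refine Fintype.linearIndependent_iff.mpr fun g hg => congrFun (hd g ?_)
  apply (algebraMap F K).injective
  rw [← pow_sum_smul_of_pow_eq_algebraMap hb, hg, map_zero, zero_pow (Fact.out : p.Prime).ne_zero]

theorem defect_tensor_eq_card_mul_defect [CharP F p] (B : Basis ι F K)
    (hB : ∀ i, B i ^ p = algebraMap F K (d i)) {κ : Type*} [Fintype κ] (c : κ → F) :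
    defect p F (fun j : κ × ι => c j.1 * d j.2) =
      Fintype.card ι * defect p K (fun j => algebraMap F K (c j)) := by
  let Φ : (κ × ι → F) ≃ₗ[F] (κ → K) :=
    (LinearEquiv.curry F F κ ι).trans (LinearEquiv.piCongrRight fun _ => B.equivFun.symm)
  have hΦ : ∀ x j, Φ x j = ∑ i, x (j, i) • B i := fun x j => B.equivFun_symm_apply _
  have hzero : zeroSubmodule p F (fun j : κ × ι => c j.1 * d j.2) =
      ((zeroSubmodule p K fun j => algebraMap F K (c j)).restrictScalars F).comap
        Φ.toLinearMap := by
    ext x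
    simp only [Submodule.mem_comap, Submodule.restrictScalars_mem, mem_zeroSubmodule,
      LinearEquiv.coe_coe, hΦ, pow_sum_smul_of_pow_eq_algebraMap hB, ← map_mul, ← map_sum,
      map_eq_zero_iff _ (algebraMap F K).injective, Fintype.sum_prod_type, Finset.mul_sum,
      mul_assoc]
  rw [defect_eq_finrank_zeroSubmodule, defect_eq_finrank_zeroSubmodule, hzero,
    Submodule.comap_equiv_eq_map_symm, LinearEquiv.finrank_map_eq,
    ((Submodule.restrictScalarsEquiv F K _ _).restrictScalars F).finrank_eq,
    ← Module.finrank_mul_finrank F K, finrank_eq_card_basis B]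

end Transfer

section PurelyInseparable

variable {F E : Type*} [Field F] [Field E] [Algebra F E]

theorem isIntegral_of_pow_eq_algebraMap {n : ℕ} (hn : 0 < n) {x : E} {a : F}
    (hx : x ^ n = algebraMap F E a) : IsIntegral F x :=
  IsIntegral.of_pow hn (hx ▸ isIntegral_algebraMap)

theorem finrank_adjoin_simple_le_of_pow_eq_algebraMap {n : ℕ} (hn : 0 < n) {x : E} {a : F}
    (hx : x ^ n = algebraMap F E a) : finrank F F⟮x⟯ ≤ n := by
  rw [adjoin.finrank (isIntegral_of_pow_eq_algebraMap hn hx)]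
  have hroot : Polynomial.aeval x (Polynomial.X ^ n - Polynomial.C a) = 0 := by simp [hx]
  calc (minpoly F x).natDegree ≤ (Polynomial.X ^ n - Polynomial.C a).natDegree :=
        Polynomial.natDegree_le_of_dvd (minpoly.dvd F x hroot) (Polynomial.X_pow_sub_C_ne_zero hn a)
    _ = n := Polynomial.natDegree_X_pow_sub_C

theorem finrank_adjoin_image_le {ι : Type*} (α : ι → E) {n : ℕ}
    (hα : ∀ i, finrank F F⟮α i⟯ ≤ n) (s : Finset ι) :
    finrank F (adjoin F (α '' s)) ≤ n ^ s.card := by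
  classical
  induction s using Finset.induction_on with
  | empty =>
    rw [Finset.coe_empty, Set.image_empty, adjoin_empty, IntermediateField.finrank_bot,
      Finset.card_empty, pow_zero]
  | insert i s hi ih =>
    rw [Finset.coe_insert, Set.image_insert_eq, Set.insert_eq, adjoin_union,
      Finset.card_insert_of_notMem hi, pow_succ']
    exact (finrank_sup_le _ _).trans (Nat.mul_le_mul (hα i) ih)

theorem exists_basis_adjoin_of_anisotropic_pfister {p : ℕ} [Fact p.Prime] [CharP E p]
    {ι : Type*} [Fintype ι] [DecidableEq ι] {a : ι → F} {α : ι → E}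
    (hπ : Anisotropic p F fun i : ι → Fin p => ∏ t, a t ^ (i t : ℕ))
    (hα : ∀ t, α t ^ p = algebraMap F E (a t)) :
    ∃ B : Basis (ι → Fin p) F (adjoin F (Set.range α)),
      ∀ i, B i ^ p = algebraMap F _ (∏ t, a t ^ (i t : ℕ)) := by
  have hp : 0 < p := (Fact.out : p.Prime).pos
  set K := adjoin F (Set.range α)
  let α' : ι → K := fun t => ⟨α t, subset_adjoin F _ ⟨t, rfl⟩⟩
  let b : (ι → Fin p) → K := fun i => ∏ t, α' t ^ (i t : ℕ)
  have hb : ∀ i, b i ^ p = algebraMap F K (∏ t, a t ^ (i t : ℕ)) := fun i => by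
    simp only [b, ← Finset.prod_pow, map_prod]
    refine Finset.prod_congr rfl fun t _ => ?_
    rw [← pow_mul, mul_comm, pow_mul, map_pow]
    congr 1
    exact Subtype.ext (hα t)
  have hli := linearIndependent_of_anisotropic hπ hb
  have : FiniteDimensional F K := finiteDimensional_adjoin fun x ⟨t, ht⟩ =>
    ht ▸ isIntegral_of_pow_eq_algebraMap hp (hα t)
  have hle : finrank F K ≤ p ^ Fintype.card ι := by
    have := finrank_adjoin_image_le α
      (fun t => finrank_adjoin_simple_le_of_pow_eq_algebraMap hp (hα t)) Finset.univ
    rwa [Finset.coe_univ, Set.image_univ, Finset.card_univ] at this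
  refine ⟨basisOfLinearIndependentOfCardEqFinrank hli
    (le_antisymm hli.fintype_card_le_finrank (by simpa using hle)), fun i => ?_⟩
  rw [coe_basisOfLinearIndependentOfCardEqFinrank]
  exact hb i

end PurelyInseparable

theorem defect_tensor_pfister_eq_pow_mul_defect_general (p : ℕ) [Fact p.Prime]
    (F : Type*) [Field F] [CharP F p]
    (r : ℕ) (a : Fin r → F)
    (hπ : Anisotropic p F (fun i : Fin r → Fin p => ∏ t, a t ^ (i t : ℕ)))
    (α : Fin r → AlgebraicClosure F)
    (hα : ∀ i, α i ^ p = algebraMap F (AlgebraicClosure F) (a i))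
    (m : ℕ) (c : Fin m → F) :
    defect p F (fun j : Fin m × (Fin r → Fin p) => c j.1 * ∏ t, a t ^ (j.2 t : ℕ)) =
      p ^ r * defect p ↥(IntermediateField.adjoin F (Set.range α))
        (fun i => algebraMap F ↥(IntermediateField.adjoin F (Set.range α)) (c i)) := by
  obtain ⟨B, hB⟩ := exists_basis_adjoin_of_anisotropic_pfister hπ hα
  rw [defect_tensor_eq_card_mul_defect B hB c, Fintype.card_fun, Fintype.card_fin, Fintype.card_fin]

/-- Theorem: if `π = ⟪a₁,…,a_r⟫` is anisotropic and `K = F(α₁,…,α_r)` with `αᵢ^p = aᵢ`,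
then `i_d(φ ⊗ π) = p^r · i_d(φ_K)` for every anisotropic `φ` over `F`. -/
theorem defect_tensor_pfister_eq_pow_mul_defect (p : ℕ) [Fact p.Prime]
    (F : Type*) [Field F] [CharP F p]
    (r : ℕ) (hr : 1 ≤ r) (a : Fin r → F)
    (hπ : Anisotropic p F (fun i : Fin r → Fin p => ∏ t, a t ^ (i t : ℕ)))
    (α : Fin r → AlgebraicClosure F)
    (hα : ∀ i, α i ^ p = algebraMap F (AlgebraicClosure F) (a i))
    (m : ℕ) (c : Fin m → F) (hc : Anisotropic p F c) :
    defect p F (fun j : Fin m × (Fin r → Fin p) => c j.1 * ∏ t, a t ^ (j.2 t : ℕ)) =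
      p ^ r * defect p ↥(IntermediateField.adjoin F (Set.range α))
        (fun i => algebraMap F ↥(IntermediateField.adjoin F (Set.range α)) (c i)) :=
  defect_tensor_pfister_eq_pow_mul_defect_general p F r a hπ α hα m c
end

section
/- Let F be a field of characteristic p > 0 and φ = ⟨a₀,a₁,…,aₙ⟩ a diagonal quasilinear p-form over F with a₀ ≠ 0 and [F^p(a₁/a₀,…,aₙ/a₀) : F^p] = p^m. Then there exist m+1 purely inseparable field extensions E₀,…,E_m of F such that the numbers dim(φ_{E₀})_an,…,dim(φ_{E_m})_an are pairwise distinct; in particular, the set {dim(φ_E)_an : E a field extension of F} has at least m+1 elements. -/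
open scoped BigOperators

set_option synthInstance.maxHeartbeats 1000000
set_option maxHeartbeats 1000000

universe u

/-! Frobenius identifies the zero set of `φ_E` with the kernel of the `E^p`-linear map
`y ↦ ∑ yᵢ aᵢ`, so `dim (φ_E)_an` is the `E^p`-dimension of the span of `a₀, …, aₙ`.
Adjoining one ratio `aᵢ / a₀` to a field containing `F^p` raises the degree by at most `p`, so
the hypothesis yields ratios `b₀, …, b_{m-1}` with `b_k ∉ F^p(b₀, …, b_{k-1})`.
For `E_k = F(b₀^{1/p}, …, b_{k-1}^{1/p})` we have `E_k^p ⊆ F^p(b₀, …, b_{k-1}) ∌ b_k` but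
`b_k ∈ E_{k+1}^p`: the vectors `a₀` and `aᵢ = b_k a₀` are independent over `E_k^p` and dependent
over `E_{k+1}^p`, so the dimension of the span drops strictly from `E_k` to `E_{k+1}`. -/

open Module Set IntermediateField Polynomial

attribute [local instance] RingHomInvPair.of_ringEquiv RingHomInvPair.of_ringEquiv_symm

theorem LinearEquiv.finrank_eq_of_ringEquiv {R R' M M' : Type*} [Field R] [Field R']
    [AddCommGroup M] [AddCommGroup M'] [Module R M] [Module R' M'] {σ : R ≃+* R'}
    (e : M ≃ₛₗ[(σ : R →+* R')] M') : finrank R M = finrank R' M' := by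
  simpa [finrank] using congrArg Cardinal.toNat
    (lift_rank_eq_of_equiv_equiv σ e.toAddEquiv σ.bijective e.map_smulₛₗ)

theorem defect_add_finrank_span_eq_card {ι E Ω : Type*} [Fintype ι] [Field E] [Field Ω]
    (p : ℕ) [ExpChar Ω p] (f : E →+* Ω) (a : ι → E) :
    defect p E a + finrank ((frobenius Ω p).comp f).fieldRange
      (Submodule.span ((frobenius Ω p).comp f).fieldRange (range (f ∘ a))) = Fintype.card ι := by
  set K := ((frobenius Ω p).comp f).fieldRange
  set e : E ≃+* K := ((frobenius Ω p).comp f).rangeRestrictFieldEquiv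
  let Φ : (ι → E) ≃ₛₗ[(e : E →+* K)] (ι → K) :=
    { RingEquiv.piCongrRight fun _ => e with
      map_smul' := fun c x => by ext i; simp }
  set g : (ι → K) →ₗ[K] Ω := Fintype.linearCombination K (f ∘ a)
  have hg : ∀ x, g (Φ x) = f (∑ i, a i * x i ^ p) := by
    intro x
    simp only [g, Fintype.linearCombination_apply, map_sum, map_mul, map_pow]
    exact Finset.sum_congr rfl fun i _ => mul_comm (f (x i) ^ p) (f (a i))
  have hW : Submodule.span E {x : ι → E | ∑ i, a i * x i ^ p = 0}
      = (LinearMap.ker g).comap (Φ : (ι → E) →ₛₗ[(e : E →+* K)] (ι → K)) := by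
    convert Submodule.span_eq _
    ext x
    rw [SetLike.mem_coe, Submodule.mem_comap, LinearMap.mem_ker, LinearEquiv.coe_coe, hg,
      map_eq_zero_iff f f.injective, Set.mem_ofPred_eq]
  rw [defect, hW, (Φ.ofSubmodule' _).finrank_eq_of_ringEquiv, ← Fintype.range_linearCombination,
    add_comm, LinearMap.finrank_range_add_finrank_ker, Module.finrank_fintype_fun_eq_card]

theorem Subfield.span_subset_span_of_le {Ω : Type*} [Field Ω] {K K' : Subfield Ω} (h : K ≤ K')
    (s : Set Ω) : (Submodule.span K s : Set Ω) ⊆ Submodule.span K' s := by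
  intro x hx
  induction hx using Submodule.span_induction with
  | mem y hy => exact Submodule.subset_span hy
  | zero => exact Submodule.zero_mem _
  | add y z _ _ hy hz => exact Submodule.add_mem _ hy hz
  | smul c y _ hy => exact Submodule.smul_mem _ (⟨c, h c.2⟩ : K') hy

theorem finrank_span_lt_of_mul_mem {Ω : Type*} [Field Ω] {K K' : Subfield Ω} (hKK' : K ≤ K')
    {s : Set Ω} (hs : s.Finite) {u w b : Ω} (hu : u ∈ s) (hw : w ∈ s) (hu0 : u ≠ 0)
    (hbK' : b ∈ K') (hbK : b ∉ K) (hwu : w = b * u) :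
    finrank K' (Submodule.span K' s) < finrank K (Submodule.span K s) := by
  classical
  have hpair : LinearIndepOn K id {u, w} := by
    refine linearIndepOn_id_pair hu0 fun c hc => hbK ?_
    rw [hwu, Subfield.smul_def] at hc
    exact mul_right_cancel₀ hu0 hc ▸ c.2
  obtain ⟨T, hTs, huwT, hsT, hTind⟩ :=
    exists_linearIndepOn_id_extension hpair (insert_subset hu (singleton_subset_iff.2 hw))
  have hTfin : T.Finite := hs.subset hTs
  set T' := hTfin.toFinset
  have hw' : w ∈ T' := hTfin.mem_toFinset.2 (huwT (by simp))
  have hu' : u ∈ T'.erase w := by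
    refine Finset.mem_erase.2 ⟨fun h => hbK ?_, hTfin.mem_toFinset.2 (huwT (by simp))⟩
    have hb1 : b = 1 := mul_right_cancel₀ hu0 (by rw [one_mul, ← hwu, h])
    exact hb1 ▸ K.one_mem
  have hspanK : Submodule.span K s = Submodule.span K (T' : Set Ω) := by
    rw [hTfin.coe_toFinset]
    exact le_antisymm (Submodule.span_le.2 hsT) (Submodule.span_mono hTs)
  have hspanK' : Submodule.span K' s ≤ Submodule.span K' (T'.erase w : Set Ω) := by
    have hwspan : w ∈ Submodule.span K' (T'.erase w : Set Ω) := by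
      have hbu := Submodule.smul_mem _ (⟨b, hbK'⟩ : K') (Submodule.subset_span (R := K') hu')
      rwa [Subfield.smul_def, smul_eq_mul, ← hwu] at hbu
    have hspanT : Submodule.span K' T ≤ Submodule.span K' (T'.erase w : Set Ω) := by
      refine Submodule.span_le.2 fun y hy => ?_
      by_cases hyw : y = w
      · exact hyw ▸ hwspan
      · exact Submodule.subset_span (Finset.mem_erase.2 ⟨hyw, hTfin.mem_toFinset.2 hy⟩)
    exact Submodule.span_le.2 fun x hx => hspanT (Subfield.span_subset_span_of_le hKK' T (hsT hx))
  calc finrank K' (Submodule.span K' s)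
      ≤ (T'.erase w).card := (Submodule.finrank_mono hspanK').trans (finrank_span_finset_le_card _)
    _ < T'.card := Finset.card_erase_lt_of_mem hw'
    _ = finrank K (Submodule.span K s) := by
      rw [hspanK, finrank_span_finset_eq_card (by rw [hTfin.coe_toFinset]; exact hTind)]

section
variable {K L : Type*} [Field K] [Field L] [Algebra K L] {p : ℕ}

theorem finrank_adjoin_simple_le_of_pow_mem (hp : 0 < p) {x : L}
    (hx : x ^ p ∈ (algebraMap K L).range) : finrank K K⟮x⟯ ≤ p := by
  obtain ⟨c, hc⟩ := hx
  have hroot : aeval x (X ^ p - C c) = 0 := by simp [hc]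
  have hne : (X ^ p - C c : K[X]) ≠ 0 := (monic_X_pow_sub_C c hp.ne').ne_zero
  have hint : IsIntegral K x := ⟨_, monic_X_pow_sub_C c hp.ne', by simpa [aeval_def] using hroot⟩
  rw [adjoin.finrank hint, ← natDegree_X_pow_sub_C (n := p) (r := c)]
  exact natDegree_le_natDegree (minpoly.degree_le_of_ne_zero K x hne hroot)

theorem finrank_adjoin_le_pow_card (hp : 0 < p) (t : Finset L)
    (ht : ∀ x ∈ t, x ^ p ∈ (algebraMap K L).range) :
    finrank K (adjoin K (t : Set L)) ≤ p ^ t.card := by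
  classical
  induction t using Finset.induction_on with
  | empty =>
    rw [Finset.coe_empty, adjoin_empty, IntermediateField.finrank_bot, Finset.card_empty, pow_zero]
  | insert x t hxt ih =>
    obtain ⟨c, hc⟩ := ht x (Finset.mem_insert_self x t)
    have hx : x ^ p ∈ (algebraMap (adjoin K (t : Set L)) L).range :=
      ⟨algebraMap K _ c, by rw [← IsScalarTower.algebraMap_apply, hc]⟩
    rw [Finset.coe_insert, insert_eq, union_comm, ← adjoin_adjoin_left,
      Finset.card_insert_of_notMem hxt, pow_succ]
    calc _ = finrank K (adjoin K (t : Set L)) * finrank (adjoin K (t : Set L))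
          (adjoin (adjoin K (t : Set L)) {x}) := (finrank_mul_finrank _ _ _).symm
      _ ≤ p ^ t.card * p := Nat.mul_le_mul (ih fun y hy => ht y (Finset.mem_insert_of_mem hy))
          (finrank_adjoin_simple_le_of_pow_mem hp hx)

theorem exists_seq_notMem_adjoin (hp : 1 < p) {s : Set L}
    (hs : ∀ x ∈ s, x ^ p ∈ (algebraMap K L).range) {m : ℕ}
    (hm : p ^ m ≤ finrank K (adjoin K s)) :
    ∃ b : ℕ → L, ∀ l < m, b l ∈ s ∧ b l ∉ adjoin K (b '' Iio l) := by
  classical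
  suffices ∀ k ≤ m, ∃ b : ℕ → L, ∀ l < k, b l ∈ s ∧ b l ∉ adjoin K (b '' Iio l) from
    this m le_rfl
  intro k hk
  induction k with
  | zero => exact ⟨fun _ => 0, fun l hl => absurd hl l.not_lt_zero⟩
  | succ k ih =>
    obtain ⟨b, hb⟩ := ih (by omega)
    have hbs : b '' Iio k ⊆ s := by rintro _ ⟨l, hl, rfl⟩; exact (hb l hl).1
    have hlt : finrank K (adjoin K (b '' Iio k)) < finrank K (adjoin K s) := by
      have himage : (((Finset.range k).image b : Finset L) : Set L) = b '' Iio k := by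
        rw [Finset.coe_image, Finset.coe_range]
      calc finrank K (adjoin K (b '' Iio k))
          ≤ p ^ ((Finset.range k).image b).card := himage ▸ finrank_adjoin_le_pow_card
            (by omega) _ fun x hx => hs x (hbs (himage ▸ hx))
        _ ≤ p ^ k := Nat.pow_le_pow_right (by omega)
            ((Finset.card_image_le).trans (Finset.card_range k).le)
        _ < p ^ m := Nat.pow_lt_pow_right hp (by omega)
        _ ≤ _ := hm
    obtain ⟨x, hxs, hx⟩ : ∃ x ∈ s, x ∉ adjoin K (b '' Iio k) := by
      by_contra! h
      have heq : adjoin K s = adjoin K (b '' Iio k) :=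
        le_antisymm (adjoin_le_iff.2 h) (adjoin.mono K _ _ hbs)
      exact hlt.ne (heq ▸ rfl)
    refine ⟨Function.update b k x, fun l hl => ?_⟩
    have hagree : Function.update b k x '' Iio l = b '' Iio l :=
      Set.EqOn.image_eq fun j hj => Function.update_of_ne (by rw [mem_Iio] at hj; omega) _ _
    rw [hagree]
    rcases (Nat.lt_succ_iff_lt_or_eq.1 hl) with hl | rfl
    · rw [Function.update_of_ne (by omega)]
      exact hb l hl
    · rw [Function.update_self]
      exact ⟨hxs, hx⟩

end

theorem pow_mem_map_of_mem_adjoin {F Ω : Type*} [Field F] [Field Ω] [Algebra F Ω] (p : ℕ)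
    [ExpChar Ω p] {K : Subfield F} (hK : ∀ y : F, y ^ p ∈ K) {S : Set Ω}
    (hS : ∀ x ∈ S, x ^ p ∈ K.map (algebraMap F Ω)) {x : Ω} (hx : x ∈ adjoin F S) :
    x ^ p ∈ K.map (algebraMap F Ω) := by
  have hle : (adjoin F S).toSubfield ≤ (K.map (algebraMap F Ω)).comap (frobenius Ω p) := by
    rw [adjoin_toSubfield, Subfield.closure_le]
    rintro _ (⟨y, rfl⟩ | hy)
    · exact ⟨y ^ p, hK y, by simp [frobenius_def]⟩
    · exact hS _ hy
  exact hle hx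

theorem exists_purelyInseparable_card_sub_defect_succ_lt {F : Type*} [Field F] (p : ℕ)
    [Fact p.Prime] [CharP F p] {ι : Type*} [Fintype ι] (a : ι → F) {i₀ : ι} (ha : a i₀ ≠ 0)
    {s : Set F} (hs : ∀ x ∈ s, ∃ i, a i = x * a i₀) {m : ℕ} (hm : p ^ m ≤ pDeg p s) :
    ∃ E : ℕ → IntermediateField F (AlgebraicClosure F), (∀ k, IsPurelyInseparable F (E k)) ∧
      ∀ k < m, Fintype.card ι - defect p (E (k + 1)) (fun j => algebraMap F (E (k + 1)) (a j))
        < Fintype.card ι - defect p (E k) (fun j => algebraMap F (E k) (a j)) := by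
  have hp : p.Prime := Fact.out
  set Ω := AlgebraicClosure F
  set ι' := algebraMap F Ω
  obtain ⟨b, hb⟩ := exists_seq_notMem_adjoin (K := pPow p F) hp.one_lt
    (fun x _ => ⟨⟨x ^ p, Subfield.subset_closure ⟨x, rfl⟩⟩, rfl⟩) hm
  choose ρ hρ using fun l => IsAlgClosed.exists_pow_nat_eq (ι' (b l)) hp.pos
  set E : ℕ → IntermediateField F Ω := fun k => adjoin F (ρ '' Iio k)
  refine ⟨E, fun k => (isPurelyInseparable_adjoin_iff_pow_mem F _ p).2 ?_, fun k hk => ?_⟩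
  · rintro _ ⟨l, -, rfl⟩
    exact ⟨1, b l, by rw [pow_one, hρ]⟩
  set Kp : ℕ → Subfield Ω := fun k => ((frobenius Ω p).comp (algebraMap (E k) Ω)).fieldRange
  have hdim : ∀ k, Fintype.card ι - defect p (E k) (fun j => algebraMap F (E k) (a j)) =
      finrank (Kp k) (Submodule.span (Kp k) (range (ι' ∘ a))) := fun k =>
    Nat.sub_eq_of_eq_add' (defect_add_finrank_span_eq_card p (algebraMap (E k) Ω) _).symm
  rw [hdim, hdim]
  obtain ⟨hbs, hbk⟩ := hb k hk
  obtain ⟨i, hi⟩ := hs _ hbs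
  refine finrank_span_lt_of_mul_mem ?_ (finite_range _) (mem_range_self i₀) (mem_range_self i)
    (by simpa using ha) (b := ι' (b k)) ?_ ?_ (by simp [hi])
  · rintro _ ⟨x, rfl⟩
    exact ⟨⟨x, adjoin.mono F _ _ (image_mono (Iio_subset_Iio k.le_succ)) x.2⟩, rfl⟩
  · exact ⟨⟨ρ k, subset_adjoin F _ ⟨k, Nat.lt_succ_self k, rfl⟩⟩, hρ k⟩
  · rintro ⟨x, hx⟩
    obtain ⟨y, hy, hyx⟩ := pow_mem_map_of_mem_adjoin p
      (K := (adjoin (pPow p F) (b '' Iio k)).toSubfield)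
      (fun y => algebraMap_mem _ (⟨y ^ p, Subfield.subset_closure ⟨y, rfl⟩⟩ : pPow p F))
      (by rintro _ ⟨l, hl, rfl⟩; exact ⟨b l, subset_adjoin _ _ ⟨l, hl, rfl⟩, (hρ l).symm⟩) x.2
    exact hbk (ι'.injective (hyx.trans hx) ▸ hy)

/-- If the norm degree of `φ = ⟨a₀,…,aₙ⟩` is `p^m`, then there are `m+1` purely inseparable
extensions of `F` over which the dimensions of the anisotropic part of `φ` are pairwise
distinct; in particular the full splitting pattern of `φ` has at least `m+1` elements. -/
theorem card_fullSplittingPattern_ge (p : ℕ) [Fact p.Prime] (F : Type u) [Field F] [CharP F p]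
    (n : ℕ) (a : Fin (n + 1) → F) (ha0 : a 0 ≠ 0) (m : ℕ)
    (hdeg : pDeg p (Set.range fun i : Fin n => a i.succ / a 0) = p ^ m) :
    (∃ E : Fin (m + 1) → IntermediateField F (AlgebraicClosure F),
        (∀ i, IsPurelyInseparable F ↥(E i)) ∧
        Function.Injective fun i =>
          (n + 1) - defect p ↥(E i) (fun j => algebraMap F ↥(E i) (a j))) ∧
      m + 1 ≤ Set.ncard {d : ℕ | ∃ (E : Type u) (_ : Field E) (_ : Algebra F E),
        (n + 1) - defect p E (fun j => algebraMap F E (a j)) = d} := by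
  obtain ⟨E, hPI, hlt⟩ := exists_purelyInseparable_card_sub_defect_succ_lt p a ha0
    (s := range fun i : Fin n => a i.succ / a 0)
    (fun _ ⟨i, hi⟩ => ⟨i.succ, hi ▸ (div_mul_cancel₀ _ ha0).symm⟩) hdeg.ge
  have hinj : Function.Injective fun i : Fin (m + 1) =>
      (n + 1) - defect p ↥(E i) (fun j => algebraMap F ↥(E i) (a j)) :=
    (Fin.strictAnti_iff_succ_lt.2 fun i => by simpa using hlt i i.isLt).injective
  refine ⟨⟨fun i => E i, fun i => hPI i, hinj⟩, ?_⟩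
  calc m + 1 = (range fun i : Fin (m + 1) =>
        (n + 1) - defect p ↥(E i) (fun j => algebraMap F ↥(E i) (a j))).ncard := by
        rw [ncard_range_of_injective hinj, Nat.card_fin]
    _ ≤ _ := by
        refine ncard_le_ncard ?_ ((finite_Iic (n + 1)).subset ?_)
        · rintro _ ⟨i, rfl⟩
          exact ⟨E i, inferInstance, inferInstance, rfl⟩
        · rintro _ ⟨_, _, _, rfl⟩
          exact Nat.sub_le _ _
end

section
/- Let F be a field of characteristic p > 0 and let {a₁,…,a_m} ⊆ F be p-independent over F. Let φ = ⟨1,a₁,…,a_m⟩ (a minimal quasilinear p-form of dimension m+1, anisotropic over F). Then the full splitting pattern of φ is {1,2,…,m+1}: for every field extension E/F one has 1 ≤ dim(φ_E)_an ≤ m+1, and conversely for every integer 1 ≤ j ≤ m+1 there exists a field extension E/F with dim(φ_E)_an = j. -/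
open scoped BigOperators

set_option synthInstance.maxHeartbeats 1000000
set_option maxHeartbeats 1000000

/-! The zero set of `φ_E` never contains the first basis vector (its value is `1`), so
`dim (φ_E)_an ≥ 1`. Conversely, adjoin to `F` the `p`-th roots `β_i` of the `a_i` for `i` in a set
`S` of `m + 1 - j` indices. The vectors `β_i e₀ - e_{i+1}` (`i ∈ S`) lie in the zero set, and the
subform `⟨1, a_i : i ∉ S⟩` stays anisotropic: `E^p ⊆ F^p(a_i : i ∈ S)`, and by the tower law
applied to `[F^p(a) : F^p] = p^m`, the monomials in the `a_i` with `i ∉ S` (among them `1` and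
these `a_i`) are linearly independent over `F^p(a_i : i ∈ S)`. -/

section DiagonalForm

variable (p : ℕ) [Fact p.Prime] {E : Type*} [Field E] [CharP E p] {ι : Type*} [Fintype ι]

def diagForm (c : ι → E) : (ι → E) →ₛₗ[frobenius E p] E where
  toFun x := ∑ i, c i * x i ^ p
  map_add' x y := by simp only [Pi.add_apply, add_pow_char, mul_add, Finset.sum_add_distrib]
  map_smul' r x := by
    simp only [Pi.smul_apply, smul_eq_mul, mul_pow, frobenius_def, Finset.mul_sum]
    exact Finset.sum_congr rfl fun i _ => by ring

variable {p}

theorem diagForm_apply (c : ι → E) (x : ι → E) : diagForm p c x = ∑ i, c i * x i ^ p := rfl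

theorem diagForm_single [DecidableEq ι] (c : ι → E) (i : ι) (y : E) :
    diagForm p c (Pi.single i y) = c i * y ^ p := by
  rw [diagForm_apply, Finset.sum_eq_single i (fun j _ hj => by
    rw [Pi.single_eq_of_ne hj, zero_pow (Fact.out : p.Prime).ne_zero, mul_zero]) (by simp),
    Pi.single_eq_same]

theorem defect_eq_finrank_ker (c : ι → E) :
    defect p E c = Module.finrank E (LinearMap.ker (diagForm p c)) :=
  congrArg (fun W : Submodule E (ι → E) => Module.finrank E W)
    (Submodule.span_eq (LinearMap.ker (diagForm p c)))

theorem defect_lt_card {c : ι → E} {i : ι} (hi : c i ≠ 0) : defect p E c < Fintype.card ι := by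
  classical
  have hker : LinearMap.ker (diagForm p c) ≠ ⊤ := fun htop => by
    have := LinearMap.mem_ker.mp (htop ▸ Submodule.mem_top : Pi.single i 1 ∈ _)
    rw [diagForm_single, one_pow, mul_one] at this
    exact hi this
  simpa [defect_eq_finrank_ker] using Submodule.finrank_lt hker

theorem defect_le_card_of_anisotropic [DecidableEq ι] {c : ι → E} (N : Finset ι)
    (h : Anisotropic p E fun k : {k // k ∉ N} => c k) : defect p E c ≤ N.card := by
  let restrict : (ι → E) →ₗ[E] (N → E) := LinearMap.funLeft E E Subtype.val
  have hinj : Function.Injective (restrict ∘ₗ (LinearMap.ker (diagForm p c)).subtype) := by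
    rw [← LinearMap.ker_eq_bot, LinearMap.ker_eq_bot']
    rintro ⟨x, hx⟩ hxN
    have hxN : ∀ k ∈ N, x k = 0 := fun k hk => congrFun hxN ⟨k, hk⟩
    have hxNc : (fun k : {k // k ∉ N} => x k) = 0 := h _ (by
      rw [← LinearMap.mem_ker.mp hx, diagForm_apply,
        ← Fintype.sum_subtype_add_sum_subtype (· ∈ N), right_eq_add]
      exact Finset.sum_eq_zero fun k _ => by
        rw [hxN k k.2, zero_pow (Fact.out : p.Prime).ne_zero, mul_zero])
    ext k
    by_cases hk : k ∈ N
    · exact hxN k hk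
    · exact congrFun hxNc ⟨k, hk⟩
  simpa [defect_eq_finrank_ker] using LinearMap.finrank_le_finrank_of_injective hinj

theorem card_le_defect {c : ι → E} {N : Finset ι} {j : ι} (hj : j ∉ N)
    (hN : ∀ i ∈ N, ∃ b, c i = c j * b ^ p) : N.card ≤ defect p E c := by
  classical
  choose b hb using hN
  let v : N → LinearMap.ker (diagForm p c) := fun i =>
    ⟨Pi.single (i : ι) 1 - Pi.single j (b i i.2), by
      rw [LinearMap.mem_ker, map_sub, diagForm_single, diagForm_single, one_pow, mul_one,
        hb i i.2, sub_self]⟩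
  have hv : (LinearMap.funLeft E E Subtype.val ∘ₗ (LinearMap.ker (diagForm p c)).subtype) ∘ v =
      Pi.basisFun E N := by
    ext i k
    have hkj : (k : ι) ≠ j := fun h => hj (h ▸ k.2)
    simp only [Function.comp_apply, LinearMap.coe_comp, LinearMap.funLeft_apply,
      Submodule.coe_subtype, Pi.sub_apply, Pi.single_eq_of_ne hkj, sub_zero, Pi.basisFun_apply, v,
      Pi.single_apply, Subtype.ext_iff]
  have hv := LinearIndependent.of_comp _ (hv ▸ (Pi.basisFun E N).linearIndependent)
  simpa [defect_eq_finrank_ker] using hv.fintype_card_le_finrank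

theorem defect_eq_card [DecidableEq ι] {c : ι → E} {N : Finset ι} {j : ι} (hj : j ∉ N)
    (hN : ∀ i ∈ N, ∃ b, c i = c j * b ^ p) (h : Anisotropic p E fun k : {k // k ∉ N} => c k) :
    defect p E c = N.card :=
  (defect_le_card_of_anisotropic N h).antisymm (card_le_defect hj hN)

end DiagonalForm

section Monomial

variable (p : ℕ) {F : Type*} [Field F] {ι : Type*} [Fintype ι]

def pMonomial (b : ι → F) (e : ι → Fin p) : F := ∏ i, b i ^ (e i : ℕ)

variable {p} {L : Type*} [Field L] [Algebra L F] {b : ι → F}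

theorem exists_pMonomial_mul_eq_smul (hb : ∀ i, b i ^ p ∈ (algebraMap L F).range)
    (e f : ι → Fin p) : ∃ l : L, pMonomial p b e * pMonomial p b f = l • pMonomial p b (e + f) := by
  choose c hc using hb
  refine ⟨∏ i, c i ^ ((e i + f i : ℕ) / p), ?_⟩
  rw [Algebra.smul_def, map_prod, pMonomial, pMonomial, pMonomial, ← Finset.prod_mul_distrib,
    ← Finset.prod_mul_distrib]
  refine Finset.prod_congr rfl fun i _ => ?_
  rw [map_pow, hc, ← pow_add, ← pow_mul, ← pow_add, Pi.add_apply, Fin.val_add,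
    Nat.div_add_mod]

variable [Fact p.Prime]

theorem adjoin_le_span_pMonomial (hb : ∀ i, b i ^ p ∈ (algebraMap L F).range) :
    Subalgebra.toSubmodule (IntermediateField.adjoin L (Set.range b)).toSubalgebra ≤
      Submodule.span L (Set.range (pMonomial p b)) := by
  classical
  set M := Submodule.span L (Set.range (pMonomial p b))
  have one_mem : (1 : F) ∈ M := Submodule.subset_span ⟨0, by simp [pMonomial]⟩
  have mul_mem : ∀ x y, x ∈ M → y ∈ M → x * y ∈ M := by
    refine fun x y hx hy => (?_ : M * M ≤ M) (Submodule.mul_mem_mul hx hy)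
    rw [Submodule.span_mul_span, Submodule.span_le]
    rintro _ ⟨_, ⟨e, rfl⟩, _, ⟨f, rfl⟩, rfl⟩
    obtain ⟨l, hl⟩ := exists_pMonomial_mul_eq_smul hb e f
    change _ * _ ∈ M
    rw [hl]
    exact M.smul_mem l (Submodule.subset_span ⟨e + f, rfl⟩)
  have hbM : Set.range b ⊆ M := Set.range_subset_iff.2 fun i =>
    Submodule.subset_span ⟨Pi.single i ⟨1, (Fact.out : p.Prime).one_lt⟩, by
      simp [pMonomial, Pi.single_apply, apply_ite]⟩
  have halg : ∀ x ∈ Set.range b, IsAlgebraic L x := by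
    rintro _ ⟨i, rfl⟩
    obtain ⟨l, hl⟩ := hb i
    exact (IsIntegral.of_pow (Fact.out : p.Prime).pos (hl ▸ isIntegral_algebraMap)).isAlgebraic
  rw [IntermediateField.adjoin_toSubalgebra_of_isAlgebraic halg]
  exact Algebra.adjoin_le (S := M.toSubalgebra one_mem mul_mem) hbM

theorem finrank_adjoin_le (hb : ∀ i, b i ^ p ∈ (algebraMap L F).range) :
    Module.finrank L (IntermediateField.adjoin L (Set.range b)) ≤ p ^ Fintype.card ι := by
  classical
  have := Module.Finite.span_of_finite L (Set.finite_range (pMonomial p b))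
  calc Module.finrank L (IntermediateField.adjoin L (Set.range b))
      ≤ Module.finrank L (Submodule.span L (Set.range (pMonomial p b))) :=
        Submodule.finrank_mono (adjoin_le_span_pMonomial hb)
    _ ≤ Fintype.card (ι → Fin p) := finrank_range_le_card _
    _ = p ^ Fintype.card ι := by simp

theorem linearIndependent_pMonomial (hb : ∀ i, b i ^ p ∈ (algebraMap L F).range)
    (h : Module.finrank L (IntermediateField.adjoin L (Set.range b)) = p ^ Fintype.card ι) :
    LinearIndependent L (pMonomial p b) := by
  classical
  have hspan : Submodule.span L (Set.range (pMonomial p b)) =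
      Subalgebra.toSubmodule (IntermediateField.adjoin L (Set.range b)).toSubalgebra := by
    refine le_antisymm (Submodule.span_le.2 ?_) (adjoin_le_span_pMonomial hb)
    rintro _ ⟨e, rfl⟩
    show pMonomial p b e ∈ IntermediateField.adjoin L (Set.range b)
    exact prod_mem fun i _ => pow_mem (IntermediateField.subset_adjoin L _ (Set.mem_range_self i)) _
  rw [linearIndependent_iff_card_eq_finrank_span, Set.finrank, hspan]
  simpa using h.symm

end Monomial

section PIndependence

theorem pow_mem_pPow {p : ℕ} {F : Type*} [Field F] (x : F) : x ^ p ∈ pPow p F :=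
  Subfield.subset_closure ⟨x, rfl⟩

variable {p : ℕ} [Fact p.Prime] {F : Type*} [Field F] {ι : Type*} [Fintype ι] [DecidableEq ι]

theorem linearIndependent_pMonomial_adjoin_compl {a : ι → F} (ha : pIndep p a) (S : Finset ι) :
    LinearIndependent (IntermediateField.adjoin (pPow p F) (a '' S))
      (pMonomial p fun i : {i // i ∉ S} => a i) := by
  set K := pPow p F
  set L := IntermediateField.adjoin K (a '' S) with hL_def
  set T := Set.range fun i : {i // i ∉ S} => a i
  have hpowK (x : F) : x ^ p ∈ (algebraMap K F).range := ⟨⟨x ^ p, pow_mem_pPow x⟩, rfl⟩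
  have hpowL (x : F) : x ^ p ∈ (algebraMap L F).range :=
    ⟨⟨x ^ p, L.algebraMap_mem ⟨x ^ p, pow_mem_pPow x⟩⟩, rfl⟩
  have hL : Module.finrank K L ≤ p ^ S.card := by
    have := finrank_adjoin_le (L := K) (b := fun i : (S : Set ι) => a i) fun _ => hpowK _
    rw [← Set.image_eq_range, ← hL_def] at this
    simpa using this
  have hLT : Module.finrank L (IntermediateField.adjoin L T) ≤ p ^ Fintype.card {i // i ∉ S} :=
    finrank_adjoin_le fun _ => hpowL _
  have htower : Module.finrank K L * Module.finrank L (IntermediateField.adjoin L T) =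
      p ^ Fintype.card ι := by
    rw [Module.finrank_mul_finrank]
    have hunion : a '' S ∪ T = Set.range a := by
      ext x
      constructor
      · rintro (⟨i, -, rfl⟩ | ⟨i, rfl⟩) <;> exact Set.mem_range_self _
      · rintro ⟨i, rfl⟩
        by_cases hi : i ∈ S
        exacts [Or.inl ⟨i, hi, rfl⟩, Or.inr ⟨⟨i, hi⟩, rfl⟩]
    have h := IntermediateField.adjoin_adjoin_left K (a '' S) T
    rw [hunion] at h
    change Module.finrank K ((IntermediateField.adjoin L T).restrictScalars K) = _
    rw [h]
    exact ha
  have hcard : Fintype.card ι = S.card + Fintype.card {i // i ∉ S} := by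
    rw [Fintype.card_subtype_compl, Fintype.card_coe]
    have := S.card_le_univ
    omega
  refine linearIndependent_pMonomial (fun _ => hpowL _)
    (le_antisymm hLT (le_of_not_gt fun hlt => ?_))
  have := Nat.mul_lt_mul_of_le_of_lt hL hlt (pow_pos (Fact.out : p.Prime).pos _)
  rw [htower, hcard, pow_add] at this
  exact lt_irrefl _ this

end PIndependence

section RootExtension

variable {p : ℕ} [Fact p.Prime] {F : Type*} [Field F]

theorem exists_mem_adjoin_pPow_eq_pow {ι Ω : Type*} [Field Ω] [Algebra F Ω] [CharP Ω p]
    {a : ι → F} {β : ι → Ω} (hβ : ∀ i, β i ^ p = algebraMap F Ω (a i)) {S : Set ι} {x : Ω}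
    (hx : x ∈ IntermediateField.adjoin F (β '' S)) :
    ∃ l ∈ IntermediateField.adjoin (pPow p F) (a '' S), algebraMap F Ω l = x ^ p := by
  induction hx using IntermediateField.adjoin_induction with
  | mem _ hx =>
    obtain ⟨i, hi, rfl⟩ := hx
    exact ⟨a i, IntermediateField.subset_adjoin _ _ ⟨i, hi, rfl⟩, (hβ i).symm⟩
  | algebraMap f =>
    exact ⟨f ^ p, IntermediateField.algebraMap_mem _ (⟨f ^ p, pow_mem_pPow f⟩ : pPow p F),
      map_pow _ _ _⟩
  | add x y _ _ hx hy =>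
    obtain ⟨l, hl, hlx⟩ := hx
    obtain ⟨l', hl', hly⟩ := hy
    exact ⟨l + l', add_mem hl hl', by rw [map_add, hlx, hly, add_pow_char]⟩
  | inv x _ hx =>
    obtain ⟨l, hl, hlx⟩ := hx
    exact ⟨l⁻¹, inv_mem hl, by rw [map_inv₀, hlx, inv_pow]⟩
  | mul x y _ _ hx hy =>
    obtain ⟨l, hl, hlx⟩ := hx
    obtain ⟨l', hl', hly⟩ := hy
    exact ⟨l * l', mul_mem hl hl', by rw [map_mul, hlx, hly, mul_pow]⟩

theorem anisotropic_of_linearIndependent {K E κ : Type*} [Field K] [Algebra K F] [Field E]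
    [Algebra F E] [Fintype κ] {L : IntermediateField K F}
    (hE : ∀ x : E, ∃ l ∈ L, algebraMap F E l = x ^ p) {c : κ → F} (hc : LinearIndependent L c) :
    Anisotropic p E fun k => algebraMap F E (c k) := by
  intro x hx
  choose l hl hlx using fun k => hE (x k)
  have hsum : ∑ k, (⟨l k, hl k⟩ : L) • c k = 0 := by
    apply (algebraMap F E).injective
    simpa [map_sum, hlx, mul_comm, Algebra.smul_def] using hx
  funext k
  have hlk : l k = 0 := congrArg Subtype.val (Fintype.linearIndependent_iff.1 hc _ hsum k)
  have hxk := hlx k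
  rwa [hlk, map_zero, eq_comm, pow_eq_zero_iff (Fact.out : p.Prime).ne_zero] at hxk

end RootExtension

section ConsOne

variable {p : ℕ} [Fact p.Prime] {F : Type*} [Field F] {m : ℕ}

theorem linearIndependent_cons_one {K : Type*} [Field K] [Algebra K F] {a : Fin m → F}
    {S : Finset (Fin m)} (h : LinearIndependent K (pMonomial p fun i : {i // i ∉ S} => a i)) :
    LinearIndependent K fun k : {k // k ∉ S.map (Fin.succEmb m)} =>
      (Fin.cons (1 : F) a : Fin (m + 1) → F) k := by
  let one : Fin p := ⟨1, (Fact.out : p.Prime).one_lt⟩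
  -- `1` and `a r` are the monomials with exponent vectors `0` and `Pi.single r 1`.
  let ε (k : {k // k ∉ S.map (Fin.succEmb m)}) (i : {i // i ∉ S}) : Fin p :=
    if k.1 = i.1.succ then one else 0
  have hε_eq_one (k i) : ε k i = one ↔ k.1 = i.1.succ := by
    have : one ≠ 0 := Fin.ne_of_val_ne one_ne_zero
    by_cases hk : k.1 = i.1.succ <;> simp [ε, hk, this.symm]
  have hε_succ (k k') (hkk' : ε k = ε k') (hk : k.1 ≠ 0) : k.1 = k'.1 := by
    obtain ⟨r, hr⟩ := Fin.exists_succ_eq.2 hk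
    have hrS : r ∉ S := fun hrS => k.2 (Finset.mem_map.2 ⟨r, hrS, hr⟩)
    have := (hε_eq_one k ⟨r, hrS⟩).2 hr.symm
    rw [hkk', hε_eq_one] at this
    rw [← hr, this]
  have hε : Function.Injective ε := fun k k' hkk' => Subtype.ext <| by
    by_cases hk : k.1 = 0
    · by_cases hk' : k'.1 = 0
      · rw [hk, hk']
      · exact (hε_succ k' k hkk'.symm hk').symm
    · exact hε_succ k k' hkk' hk
  convert h.comp ε hε with ⟨k, hk⟩
  cases k using Fin.cases with
  | zero => simp [pMonomial, ε, (Fin.succ_ne_zero _).symm]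
  | succ r =>
    have hr : r ∉ S := fun hr => hk (Finset.mem_map_of_mem _ hr)
    rw [Fin.cons_succ, Function.comp_apply, pMonomial, Finset.prod_eq_single ⟨r, hr⟩]
    · simp [ε, one]
    · rintro i - hi
      have : r ≠ i := fun h => hi (Subtype.ext h.symm)
      simp [ε, this]
    · simp

end ConsOne

theorem defect_cons_one_adjoin_roots {p : ℕ} [Fact p.Prime] {F Ω : Type*} [Field F] [Field Ω]
    [Algebra F Ω] [CharP Ω p] {m : ℕ} {a : Fin m → F} (ha : pIndep p a) {β : Fin m → Ω}
    (hβ : ∀ i, β i ^ p = algebraMap F Ω (a i)) (S : Finset (Fin m)) :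
    defect p (IntermediateField.adjoin F (β '' S))
      (fun i : Fin (m + 1) => algebraMap F _ ((Fin.cons (1 : F) a : Fin (m + 1) → F) i)) =
      S.card := by
  have : CharP (IntermediateField.adjoin F (β '' S)) p := (Algebra.charP_iff _ Ω p).2 ‹_›
  rw [← Finset.card_map (Fin.succEmb m)]
  refine defect_eq_card (j := 0) (by simp [Fin.succ_ne_zero]) ?_ ?_
  · intro k hk
    obtain ⟨r, hr, rfl⟩ := Finset.mem_map.1 hk
    refine ⟨⟨β r, IntermediateField.subset_adjoin _ _ ⟨r, hr, rfl⟩⟩, Subtype.ext ?_⟩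
    simp [hβ]
  · have hE (x : IntermediateField.adjoin F (β '' S)) :
        ∃ l ∈ IntermediateField.adjoin (pPow p F) (a '' S), algebraMap F _ l = x ^ p := by
      obtain ⟨l, hl, hlx⟩ := exists_mem_adjoin_pPow_eq_pow hβ x.2
      exact ⟨l, hl, Subtype.ext hlx⟩
    have hlin := linearIndependent_cons_one (linearIndependent_pMonomial_adjoin_compl ha S)
    exact anisotropic_of_linearIndependent hE hlin

universe u v

/-- The full splitting pattern of a minimal `p`-form `⟨1,a₁,…,a_m⟩` is `{1,…,m+1}`. -/
theorem fullSplittingPattern_minimal (p : ℕ) [Fact p.Prime] (F : Type u) [Field F] [CharP F p]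
    (m : ℕ) (a : Fin m → F) (ha : pIndep p a) :
    (∀ (E : Type v) (_ : Field E) (_ : Algebra F E),
        1 ≤ m + 1 - defect p E (fun i : Fin (m + 1) => algebraMap F E ((Fin.cons (1 : F) a : Fin (m + 1) → F) i)) ∧
        m + 1 - defect p E (fun i : Fin (m + 1) => algebraMap F E ((Fin.cons (1 : F) a : Fin (m + 1) → F) i)) ≤ m + 1) ∧
      (∀ j : ℕ, 1 ≤ j → j ≤ m + 1 →
        ∃ (E : Type u) (_ : Field E) (_ : Algebra F E),
          m + 1 - defect p E (fun i : Fin (m + 1) => algebraMap F E ((Fin.cons (1 : F) a : Fin (m + 1) → F) i)) = j) := by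
  refine ⟨fun E _ _ => ?_, fun j hj₁ hj₂ => ?_⟩
  · have : CharP E p := charP_of_injective_algebraMap (algebraMap F E).injective p
    have := defect_lt_card (p := p) (E := E)
      (c := fun i : Fin (m + 1) => algebraMap F E ((Fin.cons (1 : F) a : Fin (m + 1) → F) i))
      (i := 0) (by simp)
    rw [Fintype.card_fin] at this
    omega
  · obtain ⟨S, -, hS⟩ := Finset.exists_subset_card_eq (s := (Finset.univ : Finset (Fin m)))
      (n := m + 1 - j) (by rw [Finset.card_univ, Fintype.card_fin]; omega)
    let β (i : Fin m) : AlgebraicClosure F := (frobeniusEquiv _ p).symm (algebraMap F _ (a i))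
    refine ⟨IntermediateField.adjoin F (β '' S), inferInstance, inferInstance, ?_⟩
    rw [defect_cons_one_adjoin_roots ha (fun i => frobeniusEquiv_symm_pow_p _ p _) S]
    omega
end

section
/- Let F be a field of characteristic p > 0 and let {a₁,…,a_m} ⊆ F* be p-independent over F, so that π = ⟪a₁,…,a_m⟫ is anisotropic over F. Set E₀ = F and Eᵢ = F(a₁^{1/p},…,aᵢ^{1/p}) for 1 ≤ i ≤ m, inside a fixed algebraic closure of F. Then for every 0 ≤ i ≤ m: the quasi-Pfister form ⟪a_{i+1},…,a_m⟫ is anisotropic over Eᵢ, D_{Eᵢ}(π) = D_{Eᵢ}(⟪a_{i+1},…,a_m⟫), and dim(π_{Eᵢ})_an = p^{m−i} (i.e., i_d(π_{Eᵢ}) = p^m − p^{m−i}). -/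
/-!
Over `Eᵢ` the coefficients `a₁,…,aᵢ` become `p`-th powers `αⱼ ^ p`, so
`π(x) = τ(Φ x)` for `τ = ⟪a_{i+1},…,a_m⟫` and the `Eᵢ`-linear map
`(Φ x)_t = ∑_h α^h x_{(h,t)}`, which is surjective (take `h = 0`, `α^0 = 1`). Hence `π` and `τ`
take the same values over `Eᵢ`, and once `τ` is anisotropic over `Eᵢ` the zero set of `π` is
`ker Φ`, of dimension `p^m - p^{m-i}`.

`τ` stays anisotropic over `Eᵢ` because `Eᵢ` is spanned over `F` by the monomials `α^h`: writing
the entries of an isotropic vector as `x_t = ∑_h d_{t,h} α^h` turns `τ(x) = 0` into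
`∑ d_{t,h}^p a^h a^t = 0` in `F`, and `p`-independence says exactly that the `p^m` monomials in the
`aⱼ` are linearly independent over `F^p`.
-/

open scoped BigOperators

set_option synthInstance.maxHeartbeats 1000000
set_option maxHeartbeats 1000000

section Monomials

open scoped Pointwise

variable {K L : Type*} [Field K] [Field L] [Algebra K L] {p : ℕ} {ι : Type*} [Fintype ι]

theorem span_monomials_eq_adjoin (hp : 1 < p) (b : ι → L)
    (hb : ∀ j, b j ^ p ∈ Set.range (algebraMap K L)) :
    Submodule.span K (Set.range fun e : ι → Fin p => ∏ j, b j ^ (e j : ℕ)) =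
      Subalgebra.toSubmodule (Algebra.adjoin K (Set.range b)) := by
  classical
  choose c hc using hb
  set M := Set.range fun e : ι → Fin p => ∏ j, b j ^ (e j : ℕ)
  -- exponents add modulo `p`, the carries `b j ^ p = c j` become scalars
  have hmul : M * M ⊆ Submodule.span K M := by
    rintro _ ⟨_, ⟨e, rfl⟩, _, ⟨f, rfl⟩, rfl⟩
    have hcarry : (∏ j, b j ^ (e j : ℕ)) * ∏ j, b j ^ (f j : ℕ) =
        algebraMap K L (∏ j, c j ^ ((e j + f j : ℕ) / p)) *
          ∏ j, b j ^ ((e j + f j : ℕ) % p) := by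
      rw [← Finset.prod_mul_distrib, map_prod, ← Finset.prod_mul_distrib]
      refine Finset.prod_congr rfl fun j _ => ?_
      rw [← pow_add, map_pow, hc, ← pow_mul, ← pow_add, Nat.div_add_mod]
    simp only [hcarry, ← Algebra.smul_def]
    exact Submodule.smul_mem _ _ <| Submodule.subset_span
      ⟨fun j => ⟨(e j + f j : ℕ) % p, Nat.mod_lt _ (by omega)⟩, rfl⟩
  let A : Subalgebra K L := (Submodule.span K M).toSubalgebra
    (Submodule.subset_span ⟨fun _ => ⟨0, by omega⟩, by simp⟩)
    fun x y hx hy => by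
      have := Submodule.mul_mem_mul hx hy
      rw [Submodule.span_mul_span] at this
      exact Submodule.span_le.mpr hmul this
  refine le_antisymm ?_ fun x hx => (Algebra.adjoin_le (S := A) ?_ hx : x ∈ A)
  · rw [Submodule.span_le]
    rintro _ ⟨e, rfl⟩
    exact Subalgebra.prod_mem _ fun j _ =>
      Subalgebra.pow_mem _ (Algebra.subset_adjoin (Set.mem_range_self j)) _
  · rintro _ ⟨j, rfl⟩
    refine Submodule.subset_span ⟨fun k => ⟨if k = j then 1 else 0, by split_ifs <;> omega⟩, ?_⟩
    simp [apply_ite, Finset.prod_ite_eq']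

theorem span_monomials_eq_intermediateField_adjoin (hp : 1 < p) (b : ι → L)
    (hb : ∀ j, b j ^ p ∈ Set.range (algebraMap K L)) :
    Submodule.span K (Set.range fun e : ι → Fin p => ∏ j, b j ^ (e j : ℕ)) =
      Subalgebra.toSubmodule (IntermediateField.adjoin K (Set.range b)).toSubalgebra := by
  rw [span_monomials_eq_adjoin hp b hb, IntermediateField.adjoin_toSubalgebra_of_isAlgebraic]
  rintro _ ⟨j, rfl⟩
  obtain ⟨c, hc⟩ := hb j
  exact ⟨Polynomial.X ^ p - Polynomial.C c, Polynomial.X_pow_sub_C_ne_zero (by omega) c,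
    by simp [hc]⟩

theorem prod_pow_pow_eq_algebraMap {a : ι → K} {b : ι → L}
    (hb : ∀ j, b j ^ p = algebraMap K L (a j)) (e : ι → Fin p) :
    (∏ j, b j ^ (e j : ℕ)) ^ p = algebraMap K L (∏ j, a j ^ (e j : ℕ)) := by
  rw [← Finset.prod_pow, map_prod]
  refine Finset.prod_congr rfl fun j _ => ?_
  rw [← pow_mul, mul_comm, pow_mul, hb, map_pow]

end Monomials

section PIndependence

variable {p : ℕ} {F : Type*} [Field F] {ι : Type*} [Fintype ι]

theorem pIndep_comp_equiv {κ : Type*} [Fintype κ] (e : κ ≃ ι) (a : ι → F) :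
    pIndep p (a ∘ e) ↔ pIndep p a := by
  rw [pIndep, pIndep, EquivLike.range_comp, Fintype.card_congr e]

theorem pIndep.linearIndependent_monomials [DecidableEq ι] (hp : 1 < p) {a : ι → F}
    (ha : pIndep p a) :
    LinearIndependent (pPow p F) fun e : ι → Fin p => ∏ j, a j ^ (e j : ℕ) := by
  rw [linearIndependent_iff_card_eq_finrank_span, Set.finrank,
    span_monomials_eq_intermediateField_adjoin hp a
      fun j => ⟨⟨a j ^ p, Subfield.subset_closure ⟨a j, rfl⟩⟩, rfl⟩]
  simpa [pIndep, pDeg, Fintype.card_fun] using ha.symm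

theorem pIndep.eq_zero_of_sum_pow_mul_monomial_eq_zero [DecidableEq ι] (hp : 1 < p) {a : ι → F}
    (ha : pIndep p a) {d : (ι → Fin p) → F}
    (hd : ∑ e : ι → Fin p, d e ^ p * ∏ j, a j ^ (e j : ℕ) = 0) : d = 0 := by
  have hdp := Fintype.linearIndependent_iff.mp (ha.linearIndependent_monomials hp)
    (fun e => ⟨d e ^ p, Subfield.subset_closure ⟨d e, rfl⟩⟩) hd
  funext e
  exact pow_eq_zero_iff (by omega) |>.mp (congrArg Subtype.val (hdp e))

end PIndependence

theorem anisotropic_adjoin_of_pIndep {p : ℕ} [Fact p.Prime] {F Ω : Type*} [Field F] [CharP F p]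
    [Field Ω] [Algebra F Ω] {κ ι : Type*} [Fintype κ] [DecidableEq κ] [Fintype ι] [DecidableEq ι]
    {a : κ ⊕ ι → F} (ha : pIndep p a) {α : κ → Ω} (hα : ∀ k, α k ^ p = algebraMap F Ω (a (.inl k))) :
    Anisotropic p (IntermediateField.adjoin F (Set.range α))
      fun t : ι → Fin p => algebraMap F _ (∏ s, a (.inr s) ^ (t s : ℕ)) := by
  have hp := (Fact.out : p.Prime).one_lt
  have : CharP Ω p := charP_of_injective_algebraMap (algebraMap F Ω).injective p
  intro x hx
  have hcomb (t) : ∃ d : (κ → Fin p) → F, ∑ h, d h • ∏ k, α k ^ (h k : ℕ) = x t := by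
    rw [← Submodule.mem_span_range_iff_exists_fun,
      span_monomials_eq_intermediateField_adjoin hp α fun k => ⟨_, (hα k).symm⟩]
    exact (x t).2
  choose d hd using hcomb
  have hpow (t) : (x t : Ω) ^ p =
      algebraMap F Ω (∑ h, d t h ^ p * ∏ k, a (.inl k) ^ (h k : ℕ)) := by
    rw [← hd, sum_pow_char, map_sum]
    refine Finset.sum_congr rfl fun h _ => ?_
    rw [smul_pow, prod_pow_pow_eq_algebraMap hα, Algebra.smul_def, map_mul, map_pow]
  set τ := Equiv.sumArrowEquivProdArrow κ ι (Fin p)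
  have hd0 : (fun f => d (τ f).2 (τ f).1) = 0 := by
    refine ha.eq_zero_of_sum_pow_mul_monomial_eq_zero hp ((algebraMap F Ω).injective ?_)
    have hxΩ := congrArg (algebraMap _ Ω) hx
    simp only [map_sum, map_mul, map_pow, map_zero, IntermediateField.algebraMap_apply] at hxΩ
    rw [map_zero, ← hxΩ, ← τ.symm.sum_comp, Fintype.sum_prod_type, Finset.sum_comm, map_sum]
    refine Finset.sum_congr rfl fun t _ => ?_
    simp [τ, hpow, Fintype.prod_sum_type, Finset.mul_sum, mul_comm, mul_assoc]
  funext t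
  have hdt (h) : d t h = 0 := by simpa [τ] using congrFun hd0 (τ.symm (h, t))
  exact Subtype.ext (by simp [← hd t, hdt])

section ProductForm

variable {K : Type*} [Field K] {μ κ ι : Type*} [Fintype κ]

def fiberSum (e : μ ≃ κ × ι) (b : κ → K) : (μ → K) →ₗ[K] ι → K where
  toFun x t := ∑ h, b h * x (e.symm (h, t))
  map_add' x y := by ext t; simp [mul_add, Finset.sum_add_distrib]
  map_smul' c x := by ext t; simp [Finset.mul_sum, mul_left_comm]

variable {e : μ ≃ κ × ι} {b : κ → K}

theorem fiberSum_surjective {h₀ : κ} (hb : b h₀ ≠ 0) : Function.Surjective (fiberSum e b) := by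
  classical
  intro y
  refine ⟨fun f => if (e f).1 = h₀ then y (e f).2 / b h₀ else 0, funext fun t => ?_⟩
  simp [fiberSum, mul_div_cancel₀ _ hb]

variable [Fintype μ] [Fintype ι] {p : ℕ} [CharP K p] {c : μ → K} {d : ι → K}

theorem sum_mul_pow_eq_sum_mul_fiberSum_pow [Fact p.Prime]
    (hc : ∀ h t, c (e.symm (h, t)) = b h ^ p * d t) (x : μ → K) :
    ∑ f, c f * x f ^ p = ∑ t, d t * fiberSum e b x t ^ p := by
  rw [← e.symm.sum_comp, Fintype.sum_prod_type, Finset.sum_comm]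
  refine Finset.sum_congr rfl fun t _ => ?_
  simp [fiberSum, hc, sum_pow_char, mul_pow, Finset.mul_sum, mul_comm, mul_assoc]

theorem valueSet_eq_of_eq_pow_mul [Fact p.Prime] (hc : ∀ h t, c (e.symm (h, t)) = b h ^ p * d t)
    {h₀ : κ} (hb : b h₀ ≠ 0) : valueSet p K c = valueSet p K d := by
  ext y
  constructor
  · rintro ⟨x, rfl⟩
    exact ⟨fiberSum e b x, sum_mul_pow_eq_sum_mul_fiberSum_pow hc x⟩
  · rintro ⟨z, rfl⟩
    obtain ⟨x, rfl⟩ := fiberSum_surjective (e := e) hb z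
    exact ⟨x, (sum_mul_pow_eq_sum_mul_fiberSum_pow hc x).symm⟩

theorem defect_eq_of_eq_pow_mul [Fact p.Prime] (hc : ∀ h t, c (e.symm (h, t)) = b h ^ p * d t)
    {h₀ : κ} (hb : b h₀ ≠ 0) (hd : Anisotropic p K d) :
    defect p K c = Fintype.card μ - Fintype.card ι := by
  have hzero : {x : μ → K | ∑ f, c f * x f ^ p = 0} = LinearMap.ker (fiberSum e b) := by
    ext x
    simp only [Set.mem_ofPred_eq, SetLike.mem_coe, LinearMap.mem_ker,
      sum_mul_pow_eq_sum_mul_fiberSum_pow hc]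
    exact ⟨hd _, fun hx => by simp [hx, zero_pow (Fact.out : p.Prime).ne_zero]⟩
  have hrank := LinearMap.finrank_range_add_finrank_ker (fiberSum e b)
  rw [LinearMap.range_eq_top.mpr (fiberSum_surjective (e := e) hb), finrank_top,
    Module.finrank_fintype_fun_eq_card, Module.finrank_fintype_fun_eq_card] at hrank
  rw [defect, hzero, Submodule.span_eq]
  omega

end ProductForm

/-- Splitting of an anisotropic quasi-Pfister form `π = ⟪a₁,…,a_m⟫` along the tower
`Eᵢ = F(a₁^{1/p},…,aᵢ^{1/p})`: `⟪a_{i+1},…,a_m⟫` stays anisotropic over `Eᵢ`, it has the same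
value set as `π` over `Eᵢ`, and `dim(π_{Eᵢ})_an = p^{m-i}`. -/
theorem pfister_insepTower_splitting (p : ℕ) [Fact p.Prime] (F : Type*) [Field F] [CharP F p]
    (m : ℕ) (a : Fin m → F) (hindep : pIndep p a)
    (α : Fin m → AlgebraicClosure F)
    (hα : ∀ i, α i ^ p = algebraMap F (AlgebraicClosure F) (a i))
    (E : ℕ → IntermediateField F (AlgebraicClosure F))
    (hE : ∀ i, E i = IntermediateField.adjoin F (α '' {j | (j : ℕ) < i}))
    (i : ℕ) (hi : i ≤ m) :
    Anisotropic p ↥(E i) (fun idx : Fin (m - i) → Fin p => algebraMap F ↥(E i)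
        (∏ t : Fin (m - i), a ⟨i + (t : ℕ), by have := t.isLt; omega⟩ ^ (idx t : ℕ))) ∧
    valueSet p ↥(E i)
        (fun idx : Fin m → Fin p => algebraMap F ↥(E i) (∏ t, a t ^ (idx t : ℕ))) =
      valueSet p ↥(E i) (fun idx : Fin (m - i) → Fin p => algebraMap F ↥(E i)
        (∏ t : Fin (m - i), a ⟨i + (t : ℕ), by have := t.isLt; omega⟩ ^ (idx t : ℕ))) ∧
    defect p ↥(E i)
        (fun idx : Fin m → Fin p => algebraMap F ↥(E i) (∏ t, a t ^ (idx t : ℕ))) =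
      p ^ m - p ^ (m - i) := by
  set e : Fin i ⊕ Fin (m - i) ≃ Fin m := finSumFinEquiv.trans (finCongr (Nat.add_sub_cancel' hi))
  have hEi : E i = IntermediateField.adjoin F (Set.range fun k => α (e (.inl k))) := by
    rw [hE, ← Fin.range_castLE hi, ← Set.range_comp]
    rfl
  rw [hEi]
  set K := IntermediateField.adjoin F (Set.range fun k => α (e (.inl k)))
  have htail := anisotropic_adjoin_of_pIndep ((pIndep_comp_equiv e a).mpr hindep)
    (α := fun k => α (e (.inl k))) fun k => hα _
  let root (k : Fin i) : K := ⟨α (e (.inl k)), IntermediateField.subset_adjoin _ _ ⟨k, rfl⟩⟩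
  have hroot (k) : root k ^ p = algebraMap F K (a (e (.inl k))) := Subtype.ext (by simp [root, hα])
  set σ := (e.arrowCongr (.refl (Fin p))).symm.trans (Equiv.sumArrowEquivProdArrow _ _ _)
  have hsplit (h t) : algebraMap F K (∏ j, a j ^ (σ.symm (h, t) j : ℕ)) =
      (∏ k, root k ^ (h k : ℕ)) ^ p *
        algebraMap F K (∏ s : Fin (m - i), a ⟨i + s, by omega⟩ ^ (t s : ℕ)) := by
    rw [prod_pow_pow_eq_algebraMap hroot, ← map_mul, ← e.prod_comp, Fintype.prod_sum_type]
    simp only [σ, Equiv.symm_trans_apply, Equiv.symm_symm, Equiv.arrowCongr_apply,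
      Function.comp_apply, Equiv.symm_apply_apply, Equiv.refl_apply,
      Equiv.sumArrowEquivProdArrow_symm_apply_inl, Equiv.sumArrowEquivProdArrow_symm_apply_inr]
    rfl
  refine ⟨htail, valueSet_eq_of_eq_pow_mul hsplit (h₀ := fun _ => 0) (by simp), ?_⟩
  rw [defect_eq_of_eq_pow_mul hsplit (h₀ := fun _ => 0) (by simp) htail]
  simp
end

section
/- Let F be a field of characteristic p > 0, π = ⟪a₁,…,aₙ⟫ a quasi-Pfister form over F, t ≥ 1, s₁,…,s_t ∈ D_F(π), σ = ⟨s₁,…,s_t⟩, and d ∈ F* such that φ = π ⊥ dσ is anisotropic over F. Let E/F be a field extension with d ∈ D_E(π). Then i_d(φ_E) = i_d(π_E) + t; equivalently, dim(φ_E)_an = dim(π_E)_an. -/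
open scoped BigOperators

set_option synthInstance.maxHeartbeats 1000000
set_option maxHeartbeats 1000000

section Aux

variable {E : Type*} [Field E]

lemma aux_zero_pow (p : ℕ) [Fact p.Prime] : (0 : E) ^ p = 0 :=
  zero_pow (Fact.out (p := p.Prime)).ne_zero

variable {ι : Type*} [Fintype ι]

/-- The quasilinear form as an additive monoid hom. -/
noncomputable def qForm (p : ℕ) [Fact p.Prime] [CharP E p] (a : ι → E) : (ι → E) →+ E where
  toFun x := ∑ i, a i * x i ^ p
  map_zero' := by simp [aux_zero_pow p]
  map_add' x y := by
    simp only [Pi.add_apply, add_pow_char _ _ p, mul_add, Finset.sum_add_distrib]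

lemma qForm_apply (p : ℕ) [Fact p.Prime] [CharP E p] (a x : ι → E) : qForm p a x = ∑ i, a i * x i ^ p := rfl

lemma qForm_smul (p : ℕ) [Fact p.Prime] [CharP E p] (a : ι → E) (c : E) (x : ι → E) :
    qForm p a (c • x) = c ^ p * qForm p a x := by
  simp only [qForm_apply, Pi.smul_apply, smul_eq_mul, mul_pow, Finset.mul_sum]
  exact Finset.sum_congr rfl fun i _ => by ring

/-- The zero set of a diagonal quasilinear form is a submodule. -/
noncomputable def zeroSub (p : ℕ) [Fact p.Prime] [CharP E p] (a : ι → E) : Submodule E (ι → E) where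
  carrier := {x | ∑ i, a i * x i ^ p = 0}
  add_mem' {x y} hx hy := by
    have h := map_add (qForm p a) x y
    simp only [qForm_apply] at h
    simp only [Set.mem_setOf_eq] at *
    rw [h, hx, hy, add_zero]
  zero_mem' := by simp [aux_zero_pow p]
  smul_mem' c x hx := by
    have h := qForm_smul p a c x
    simp only [qForm_apply] at h
    simp only [Set.mem_setOf_eq] at *
    rw [h, hx, mul_zero]

lemma mem_zeroSub {p : ℕ} [Fact p.Prime] [CharP E p] {a x : ι → E} : x ∈ zeroSub p a ↔ qForm p a x = 0 := Iff.rfl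

lemma defect_eq (p : ℕ) [Fact p.Prime] [CharP E p] (a : ι → E) : defect p E a = Module.finrank E (zeroSub p a) := by
  unfold defect
  rw [show {x : ι → E | ∑ i, a i * x i ^ p = 0} = (zeroSub p a : Set (ι → E)) from rfl,
    Submodule.span_eq]

variable {τ : Type*} [Fintype τ]

lemma qForm_elim (p : ℕ) [Fact p.Prime] [CharP E p] (b : ι → E) (c : τ → E) (z : ι ⊕ τ → E) :
    qForm p (Sum.elim b c) z = qForm p b (z ∘ Sum.inl) + ∑ j, c j * z (Sum.inr j) ^ p := by
  simp [qForm_apply, Fintype.sum_sum_type, Function.comp]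

lemma vec_add_eq (w : ι → E) (y : τ → E) (v : τ → ι → E) :
    (fun i => w i + ∑ j, y j * v j i) = w + ∑ j, y j • v j := by
  funext i
  simp [Finset.sum_apply]

lemma qForm_shift (p : ℕ) [Fact p.Prime] [CharP E p] (b : ι → E) (c : τ → E) (v : τ → ι → E)
    (hv : ∀ j, c j = ∑ i, b i * v j i ^ p) (w : ι → E) (y : τ → E) :
    qForm p b (fun i => w i + ∑ j, y j * v j i)
      = qForm p b w + ∑ j, c j * y j ^ p := by
  rw [vec_add_eq, map_add, map_sum]
  congr 1
  refine Finset.sum_congr rfl fun j _ => ?_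
  rw [qForm_smul]
  have : qForm p b (v j) = c j := (hv j).symm
  rw [this, mul_comm]

lemma qForm_unshift (p : ℕ) [Fact p.Prime] [CharP E p] (b : ι → E) (c : τ → E) (v : τ → ι → E)
    (hv : ∀ j, c j = ∑ i, b i * v j i ^ p) (w : ι → E) (y : τ → E) :
    qForm p b (fun i => w i - ∑ j, y j * v j i)
      = qForm p b w - ∑ j, c j * y j ^ p := by
  have h := qForm_shift p b c v hv (fun i => w i - ∑ j, y j * v j i) y
  have h2 : (fun i => (w i - ∑ j, y j * v j i) + ∑ j, y j * v j i) = w := by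
    funext i; ring
  rw [h2] at h
  linear_combination -h

theorem defect_elim (p : ℕ) [Fact p.Prime] [CharP E p] (b : ι → E) (c : τ → E) (v : τ → ι → E)
    (hv : ∀ j, c j = ∑ i, b i * v j i ^ p) :
    defect p E (Sum.elim b c) = defect p E b + Fintype.card τ := by
  rw [defect_eq, defect_eq]
  have e : (zeroSub p (Sum.elim b c)) ≃ₗ[E] (zeroSub p b) × (τ → E) :=
    { toFun := fun z =>
        (⟨fun i => z.1 (Sum.inl i) + ∑ j, z.1 (Sum.inr j) * v j i, by
          have hz : qForm p (Sum.elim b c) z.1 = 0 := z.2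
          rw [qForm_elim] at hz
          have hz' : qForm p b (fun i => z.1 (Sum.inl i))
              + ∑ j, c j * z.1 (Sum.inr j) ^ p = 0 := hz
          rw [mem_zeroSub,
            qForm_shift p b c v hv (fun i => z.1 (Sum.inl i)) (fun j => z.1 (Sum.inr j))]
          linear_combination hz'⟩,
         fun j => z.1 (Sum.inr j))
      invFun := fun wy =>
        ⟨Sum.elim (fun i => wy.1.1 i - ∑ j, wy.2 j * v j i) wy.2, by
          rw [mem_zeroSub, qForm_elim]
          simp only [Sum.elim_comp_inl, Sum.elim_inr]
          rw [qForm_unshift p b c v hv wy.1.1 wy.2]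
          have hw : qForm p b wy.1.1 = 0 := wy.1.2
          rw [hw]
          ring⟩
      left_inv := fun z => by
        apply Subtype.ext
        funext k
        cases k with
        | inl i => simp
        | inr j => simp
      right_inv := fun wy => by
        refine Prod.ext (Subtype.ext (funext fun i => ?_)) (funext fun j => ?_)
        · simp
        · simp
      map_add' := fun z z' => by
        refine Prod.ext (Subtype.ext (funext fun i => ?_)) (funext fun j => ?_)
        · simp [Finset.sum_add_distrib, add_mul]
          ring
        · simp
      map_smul' := fun m z => by
        refine Prod.ext (Subtype.ext (funext fun i => ?_)) (funext fun j => ?_)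
        · show m • z.1 (Sum.inl i) + ∑ j, (m • z.1) (Sum.inr j) * v j i
            = m • (z.1 (Sum.inl i) + ∑ j, z.1 (Sum.inr j) * v j i)
          simp only [Pi.smul_apply, smul_eq_mul, mul_add, Finset.mul_sum]
          congr 1
          exact Finset.sum_congr rfl fun j _ => by ring
        · simp }
  rw [e.finrank_eq, Module.finrank_prod, Module.finrank_pi]

/-- membership of a "single" value. -/
lemma single_mem (p : ℕ) [Fact p.Prime] [CharP E p] (a : ι → E) [DecidableEq ι] (i : ι) (g : E) :
    a i * g ^ p ∈ AddMonoidHom.mrange (qForm p a) := by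
  refine ⟨Pi.single i g, ?_⟩
  rw [qForm_apply]
  rw [Finset.sum_eq_single i]
  · simp
  · intro j _ hj
    simp [Pi.single_eq_of_ne hj, aux_zero_pow p]
  · intro h; exact absurd (Finset.mem_univ i) h

lemma monomial_mul (p : ℕ) {n : ℕ} (A : Fin n → E) (i i' : Fin n → Fin p) :
    (∏ r, A r ^ (i r : ℕ)) * (∏ r, A r ^ (i' r : ℕ)) =
      (∏ r, A r ^ (((i r : ℕ) + (i' r : ℕ)) / p)) ^ p *
        ∏ r, A r ^ (((i r : ℕ) + (i' r : ℕ)) % p) := by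
  rw [← Finset.prod_mul_distrib, ← Finset.prod_pow, ← Finset.prod_mul_distrib]
  refine Finset.prod_congr rfl fun r _ => ?_
  rw [← pow_add, ← pow_mul, ← pow_add, Nat.mul_comm, Nat.div_add_mod]

lemma mul_mem_D (p : ℕ) [Fact p.Prime] [CharP E p] {n : ℕ} (A : Fin n → E) {x z : E}
    (hx : x ∈ AddMonoidHom.mrange (qForm p (fun i : Fin n → Fin p => ∏ r, A r ^ (i r : ℕ))))
    (hz : z ∈ AddMonoidHom.mrange (qForm p (fun i : Fin n → Fin p => ∏ r, A r ^ (i r : ℕ)))) :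
    x * z ∈ AddMonoidHom.mrange (qForm p (fun i : Fin n → Fin p => ∏ r, A r ^ (i r : ℕ))) := by
  have hp : 0 < p := (Fact.out (p := p.Prime)).pos
  obtain ⟨u, hu⟩ := hx
  obtain ⟨w, hw⟩ := hz
  rw [← hu, ← hw, qForm_apply, qForm_apply, Finset.sum_mul_sum]
  refine AddSubmonoid.sum_mem _ fun i _ => AddSubmonoid.sum_mem _ fun i' _ => ?_
  have key : (∏ r, A r ^ (i r : ℕ)) * u i ^ p * ((∏ r, A r ^ (i' r : ℕ)) * w i' ^ p)
      = (∏ r, A r ^ (((i r : ℕ) + (i' r : ℕ)) % p))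
        * ((∏ r, A r ^ (((i r : ℕ) + (i' r : ℕ)) / p)) * u i * w i') ^ p := by
    calc (∏ r, A r ^ (i r : ℕ)) * u i ^ p * ((∏ r, A r ^ (i' r : ℕ)) * w i' ^ p)
        = ((∏ r, A r ^ (i r : ℕ)) * (∏ r, A r ^ (i' r : ℕ))) * (u i ^ p * w i' ^ p) := by
          ring
      _ = ((∏ r, A r ^ (((i r : ℕ) + (i' r : ℕ)) / p)) ^ p *
            ∏ r, A r ^ (((i r : ℕ) + (i' r : ℕ)) % p)) * (u i ^ p * w i' ^ p) := by
          rw [monomial_mul]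
      _ = (∏ r, A r ^ (((i r : ℕ) + (i' r : ℕ)) % p))
            * ((∏ r, A r ^ (((i r : ℕ) + (i' r : ℕ)) / p)) * u i * w i') ^ p := by
          rw [mul_pow, mul_pow]; ring
  rw [key]
  have := single_mem p (fun i : Fin n → Fin p => ∏ r, A r ^ (i r : ℕ))
    (fun r => (⟨((i r : ℕ) + (i' r : ℕ)) % p, Nat.mod_lt _ hp⟩ : Fin p))
    ((∏ r, A r ^ (((i r : ℕ) + (i' r : ℕ)) / p)) * u i * w i')
  simpa using this

end Aux

universe u v

/-- If `φ = π ⊥ dσ` is anisotropic with `σ` a subform of the quasi-Pfister form `π`, and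
`d ∈ D_E(π)`, then `i_d(φ_E) = i_d(π_E) + dim σ`. -/
theorem defect_pfister_add_subform_of_mem (p : ℕ) [Fact p.Prime]
    (F : Type u) [Field F] [CharP F p]
    (n : ℕ) (a : Fin n → F) (t : ℕ) (ht : 1 ≤ t) (s : Fin t → F)
    (hs : ∀ j, s j ∈ valueSet p F (fun i : Fin n → Fin p => ∏ r, a r ^ (i r : ℕ)))
    (d : F) (hd : d ≠ 0)
    (hφ : Anisotropic p F (Sum.elim (fun i : Fin n → Fin p => ∏ r, a r ^ (i r : ℕ))
      (fun j : Fin t => d * s j)))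
    (E : Type v) [Field E] [Algebra F E]
    (hdE : algebraMap F E d ∈ valueSet p E
      (fun i : Fin n → Fin p => algebraMap F E (∏ r, a r ^ (i r : ℕ)))) :
    defect p E (fun j => algebraMap F E (Sum.elim
        (fun i : Fin n → Fin p => ∏ r, a r ^ (i r : ℕ)) (fun j : Fin t => d * s j) j)) =
      defect p E (fun i : Fin n → Fin p => algebraMap F E (∏ r, a r ^ (i r : ℕ))) + t := by
  haveI : CharP E p := charP_of_injective_algebraMap (algebraMap F E).injective p
  -- notation
  set b : (Fin n → Fin p) → E := fun i => algebraMap F E (∏ r, a r ^ (i r : ℕ)) with hb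
  set c : Fin t → E := fun j => algebraMap F E (d * s j) with hc
  have hbm : b = fun i : Fin n → Fin p => ∏ r, (algebraMap F E (a r)) ^ (i r : ℕ) := by
    funext i
    simp [hb, map_prod, map_pow]
  -- the family in the LHS equals `Sum.elim b c`
  have hfam : (fun j => algebraMap F E (Sum.elim
      (fun i : Fin n → Fin p => ∏ r, a r ^ (i r : ℕ)) (fun j : Fin t => d * s j) j))
      = Sum.elim b c := by
    funext j
    cases j <;> rfl
  rw [hfam]
  -- membership of `algebraMap d` and `algebraMap (s j)` in the value module of π over E
  set A : Fin n → E := fun r => algebraMap F E (a r) with hA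
  have hdmem : algebraMap F E d ∈
      AddMonoidHom.mrange (qForm p (fun i : Fin n → Fin p => ∏ r, A r ^ (i r : ℕ))) := by
    obtain ⟨x, hx⟩ := hdE
    rw [hbm] at hx
    exact ⟨x, hx.symm⟩
  have hsmem : ∀ j, algebraMap F E (s j) ∈
      AddMonoidHom.mrange (qForm p (fun i : Fin n → Fin p => ∏ r, A r ^ (i r : ℕ))) := by
    intro j
    obtain ⟨x, hx⟩ := hs j
    refine ⟨fun i => algebraMap F E (x i), ?_⟩
    have hx2 : algebraMap F E (s j) = ∑ i, b i * (algebraMap F E (x i)) ^ p := by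
      rw [hx, map_sum]
      exact Finset.sum_congr rfl fun i _ => by rw [map_mul, map_pow]
    rw [hbm] at hx2
    exact hx2.symm
  have hcmem : ∀ j, c j ∈
      AddMonoidHom.mrange (qForm p (fun i : Fin n → Fin p => ∏ r, A r ^ (i r : ℕ))) := by
    intro j
    have := mul_mem_D p A hdmem (hsmem j)
    simpa [hc, map_mul] using this
  choose v hv using hcmem
  have hv' : ∀ j, c j = ∑ i, b i * v j i ^ p := by
    intro j
    rw [hbm]
    exact (hv j).symm
  have := defect_elim p b c v hv'
  rw [this, Fintype.card_fin]
end

section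
/- Let F be a field of characteristic p > 0, π = ⟪a₁,…,aₙ⟫ a quasi-Pfister form over F, t ≥ 1, s₁,…,s_t ∈ D_F(π), σ = ⟨s₁,…,s_t⟩, and d ∈ F* such that φ = π ⊥ dσ is anisotropic over F. Let E/F be a field extension with d ∉ D_E(π). Then i_d(φ_E) = i_d(π_E) + i_d(σ_E); equivalently, dim(φ_E)_an = dim(π_E)_an + dim(σ_E)_an. -/
open scoped BigOperators

set_option synthInstance.maxHeartbeats 1000000
set_option maxHeartbeats 1000000

universe u v


/-!
Over a field `E` of characteristic `p` the value set of a diagonal quasilinear `p`-form is an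
`E^p`-subspace of `E`, and for the quasi-Pfister form `π = ⟪a₁, …, aₙ⟫` it is even the subfield
`E^p(a₁, …, aₙ)`. Since the `s j` lie in it, so does every value of `σ`. Hence if
`π(x) + d σ(y) = 0` with `σ(y) ≠ 0`, then `d = -π(x) / σ(y) ∈ D_E(π)`, which is excluded. So the
zero set of `π ⊥ dσ` is the product of the zero sets of `π` and `σ`, and dimensions add.
-/

section ValueSet

variable (p : ℕ) {E : Type*} [Field E] {ι κ : Type*} [Fintype ι]

def zeroSpace [Fact p.Prime] [CharP E p] (c : ι → E) : Submodule E (ι → E) where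
  carrier := {x | ∑ i, c i * x i ^ p = 0}
  add_mem' {x y} hx hy := by
    simp only [Set.mem_ofPred_eq, Pi.add_apply, add_pow_char, mul_add, Finset.sum_add_distrib] at *
    rw [hx, hy, add_zero]
  zero_mem' := by simp [zero_pow (Fact.out : p.Prime).ne_zero]
  smul_mem' z x hx := by
    simp only [Set.mem_ofPred_eq, Pi.smul_apply, smul_eq_mul, mul_pow, mul_left_comm _ (z ^ p),
      ← Finset.mul_sum] at *
    rw [hx, mul_zero]

theorem mem_zeroSpace_iff [Fact p.Prime] [CharP E p] (c : ι → E) (x : ι → E) :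
    x ∈ zeroSpace p c ↔ ∑ i, c i * x i ^ p = 0 :=
  Iff.rfl

theorem defect_eq_finrank_zeroSpace [Fact p.Prime] [CharP E p] (c : ι → E) :
    defect p E c = Module.finrank E (zeroSpace p c) :=
  congrArg (fun V : Submodule E (ι → E) => Module.finrank E V) (Submodule.span_eq (zeroSpace p c))

variable {p}

theorem zero_mem_valueSet [Fact p.Prime] (c : ι → E) : 0 ∈ valueSet p E c :=
  ⟨0, by simp [zero_pow (Fact.out : p.Prime).ne_zero]⟩

theorem add_mem_valueSet [Fact p.Prime] [CharP E p] {c : ι → E} {u v : E}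
    (hu : u ∈ valueSet p E c) (hv : v ∈ valueSet p E c) : u + v ∈ valueSet p E c := by
  obtain ⟨x, rfl⟩ := hu
  obtain ⟨y, rfl⟩ := hv
  exact ⟨x + y, by simp only [Pi.add_apply, add_pow_char, mul_add, Finset.sum_add_distrib]⟩

theorem pow_mul_mem_valueSet {c : ι → E} (z : E) {v : E} (hv : v ∈ valueSet p E c) :
    z ^ p * v ∈ valueSet p E c := by
  obtain ⟨x, rfl⟩ := hv
  exact ⟨z • x, by simp only [Pi.smul_apply, smul_eq_mul, mul_pow, Finset.mul_sum]; ring_nf⟩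

theorem sum_mem_valueSet [Fact p.Prime] [CharP E p] {c : ι → E} {α : Type*} (S : Finset α)
    {f : α → E}
    (hf : ∀ k ∈ S, f k ∈ valueSet p E c) : ∑ k ∈ S, f k ∈ valueSet p E c := by
  classical
  induction S using Finset.induction_on with
  | empty => exact zero_mem_valueSet c
  | insert k S hk ih =>
    rw [Finset.sum_insert hk]
    exact add_mem_valueSet (hf k (Finset.mem_insert_self k S))
      (ih fun l hl => hf l (Finset.mem_insert_of_mem hl))

theorem coeff_mul_pow_mem_valueSet [Fact p.Prime] (c : ι → E) (i : ι) (z : E) :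
    c i * z ^ p ∈ valueSet p E c := by
  classical
  refine ⟨Pi.single i z, ?_⟩
  rw [Finset.sum_eq_single i (fun j _ hj => by
    rw [Pi.single_eq_of_ne hj, zero_pow (Fact.out : p.Prime).ne_zero, mul_zero])
    (fun h => absurd (Finset.mem_univ i) h), Pi.single_eq_same]

theorem valueSet_subset_of_forall_mem [Fact p.Prime] [CharP E p] [Fintype κ] {c : ι → E}
    {s : κ → E}
    (hs : ∀ j, s j ∈ valueSet p E c) : valueSet p E s ⊆ valueSet p E c := by
  rintro _ ⟨y, rfl⟩
  exact sum_mem_valueSet _ fun j _ => mul_comm (y j ^ p) (s j) ▸ pow_mul_mem_valueSet (y j) (hs j)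

theorem map_mem_valueSet {F : Type*} [Field F] (f : F →+* E) {c : ι → F} {y : F}
    (hy : y ∈ valueSet p F c) : f y ∈ valueSet p E (fun i => f (c i)) := by
  obtain ⟨x, rfl⟩ := hy
  exact ⟨fun i => f (x i), by simp only [map_sum, map_mul, map_pow]⟩

end ValueSet

section Orthogonal

variable {p : ℕ} [Fact p.Prime] {E : Type*} [Field E] [CharP E p]
  {ι κ : Type*} [Fintype ι] [Fintype κ]

theorem map_zeroSpace_sumElim {c : ι → E} {s : κ → E} {d : E}
    (h : ∀ u ∈ valueSet p E c, ∀ v ∈ valueSet p E s, u + d * v = 0 → v = 0) :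
    (zeroSpace p (Sum.elim c fun j => d * s j)).map
        (LinearEquiv.sumArrowLequivProdArrow ι κ E E).toLinearMap =
      (zeroSpace p c).prod (zeroSpace p s) := by
  ext ⟨x, y⟩
  have hmem : (x, y) ∈ (zeroSpace p (Sum.elim c fun j => d * s j)).map
      (LinearEquiv.sumArrowLequivProdArrow ι κ E E).toLinearMap ↔
      ∑ i, c i * x i ^ p + d * ∑ j, s j * y j ^ p = 0 := by
    rw [Submodule.map_equiv_eq_comap_symm, Submodule.mem_comap, mem_zeroSpace_iff,
      Fintype.sum_sum_type, Finset.mul_sum]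
    simp only [LinearEquiv.coe_coe, LinearEquiv.sumArrowLequivProdArrow_symm_apply_inl,
      LinearEquiv.sumArrowLequivProdArrow_symm_apply_inr, Sum.elim_inl, Sum.elim_inr, mul_assoc]
  rw [hmem, Submodule.mem_prod, mem_zeroSpace_iff, mem_zeroSpace_iff]
  constructor
  · intro hxy
    have hσ := h _ ⟨x, rfl⟩ _ ⟨y, rfl⟩ hxy
    exact ⟨by simpa [hσ] using hxy, hσ⟩
  · rintro ⟨hπ, hσ⟩
    rw [hπ, hσ, mul_zero, add_zero]

def Submodule.prodEquivProd {R M N : Type*} [Semiring R] [AddCommMonoid M] [AddCommMonoid N]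
    [Module R M] [Module R N] (P : Submodule R M) (Q : Submodule R N) :
    P.prod Q ≃ₗ[R] P × Q where
  toFun x := (⟨x.1.1, x.2.1⟩, ⟨x.1.2, x.2.2⟩)
  invFun y := ⟨(y.1, y.2), y.1.2, y.2.2⟩
  map_add' _ _ := rfl
  map_smul' _ _ := rfl
  left_inv _ := rfl
  right_inv _ := rfl

theorem defect_sumElim_eq_add {c : ι → E} {s : κ → E} {d : E}
    (h : ∀ u ∈ valueSet p E c, ∀ v ∈ valueSet p E s, u + d * v = 0 → v = 0) :
    defect p E (Sum.elim c fun j => d * s j) = defect p E c + defect p E s := by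
  rw [defect_eq_finrank_zeroSpace, defect_eq_finrank_zeroSpace, defect_eq_finrank_zeroSpace,
    ← LinearEquiv.finrank_map_eq (LinearEquiv.sumArrowLequivProdArrow ι κ E E),
    map_zeroSpace_sumElim h, (Submodule.prodEquivProd _ _).finrank_eq, Module.finrank_prod]

end Orthogonal

section QuasiPfister

variable (p : ℕ) {E : Type*} [Field E] {n : ℕ}

def quasiPfister (a : Fin n → E) : (Fin n → Fin p) → E :=
  fun i => ∏ r, a r ^ (i r : ℕ)

variable {p}

theorem quasiPfister_mul_quasiPfister (a : Fin n → E) (i j : Fin n → Fin p) :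
    quasiPfister p a i * quasiPfister p a j =
      quasiPfister p a (i + j) * (∏ r, a r ^ (((i r : ℕ) + (j r : ℕ)) / p)) ^ p := by
  simp only [quasiPfister, ← Finset.prod_mul_distrib, ← Finset.prod_pow, ← pow_add, ← pow_mul,
    Pi.add_apply, Fin.val_add]
  refine Finset.prod_congr rfl fun r _ => congrArg (a r ^ ·) ?_
  rw [Nat.mul_comm]
  exact (Nat.mod_add_div _ _).symm

theorem mul_mem_valueSet_quasiPfister [Fact p.Prime] [CharP E p] (a : Fin n → E) {u v : E}
    (hu : u ∈ valueSet p E (quasiPfister p a)) (hv : v ∈ valueSet p E (quasiPfister p a)) :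
    u * v ∈ valueSet p E (quasiPfister p a) := by
  obtain ⟨x, rfl⟩ := hu
  obtain ⟨y, rfl⟩ := hv
  rw [Finset.sum_mul_sum]
  refine sum_mem_valueSet _ fun i _ => sum_mem_valueSet _ fun j _ => ?_
  have hij : quasiPfister p a i * x i ^ p * (quasiPfister p a j * y j ^ p) =
      quasiPfister p a (i + j) * ((∏ r, a r ^ (((i r : ℕ) + (j r : ℕ)) / p)) * x i * y j) ^ p := by
    rw [mul_pow, mul_pow]
    linear_combination (x i ^ p * y j ^ p) * quasiPfister_mul_quasiPfister a i j
  rw [hij]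
  exact coeff_mul_pow_mem_valueSet _ _ _

theorem one_mem_valueSet_quasiPfister [Fact p.Prime] (a : Fin n → E) :
    1 ∈ valueSet p E (quasiPfister p a) := by
  simpa [quasiPfister] using coeff_mul_pow_mem_valueSet (quasiPfister p a) 0 1

/-- `D_E(⟪a⟫)`, which is the field `E^p(a)`. -/
def quasiPfisterValueSubfield [Fact p.Prime] [CharP E p] (a : Fin n → E) : Subfield E :=
  let S : Subring E :=
    { carrier := valueSet p E (quasiPfister p a)
      mul_mem' := mul_mem_valueSet_quasiPfister a
      one_mem' := one_mem_valueSet_quasiPfister a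
      add_mem' := add_mem_valueSet
      zero_mem' := zero_mem_valueSet _
      neg_mem' := fun hv => by
        simpa [neg_one_pow_char] using pow_mul_mem_valueSet (-1) hv }
  { S with
    inv_mem' := fun v hv => by
      have hpow : v ^ (p - 1) ∈ S := S.pow_mem hv _
      have hinv : v⁻¹ = v⁻¹ ^ p * v ^ (p - 1) := by
        rcases eq_or_ne v 0 with rfl | hv0
        · simp [zero_pow (Fact.out : p.Prime).ne_zero]
        · have hsplit : v ^ p = v ^ (p - 1) * v := by
            rw [← pow_succ, Nat.sub_add_cancel (Fact.out : p.Prime).one_le]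
          rw [inv_pow, hsplit]
          field_simp
      rw [hinv]
      exact pow_mul_mem_valueSet _ hpow }

theorem mem_quasiPfisterValueSubfield_iff [Fact p.Prime] [CharP E p] (a : Fin n → E) (v : E) :
    v ∈ quasiPfisterValueSubfield a ↔ v ∈ valueSet p E (quasiPfister p a) :=
  Iff.rfl

theorem defect_quasiPfister_sumElim_eq_add [Fact p.Prime] [CharP E p] {t : ℕ} (a : Fin n → E)
    {s : Fin t → E} {d : E}
    (hs : ∀ j, s j ∈ valueSet p E (quasiPfister p a))
    (hd : d ∉ valueSet p E (quasiPfister p a)) :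
    defect p E (Sum.elim (quasiPfister p a) fun j => d * s j) =
      defect p E (quasiPfister p a) + defect p E s := by
  refine defect_sumElim_eq_add fun u hu v hv huv => ?_
  by_contra hv0
  have hd_eq : d = -(u / v) := by
    field_simp
    linear_combination huv
  refine hd ((mem_quasiPfisterValueSubfield_iff a d).1 ?_)
  rw [hd_eq]
  exact Subfield.neg_mem _ (Subfield.div_mem _ hu (valueSet_subset_of_forall_mem hs hv))

end QuasiPfister

theorem defect_pfister_add_subform_of_not_mem_general (p : ℕ) [Fact p.Prime]
    (F : Type u) [Field F] [CharP F p]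
    (n : ℕ) (a : Fin n → F) (t : ℕ) (s : Fin t → F)
    (hs : ∀ j, s j ∈ valueSet p F (fun i : Fin n → Fin p => ∏ r, a r ^ (i r : ℕ)))
    (d : F)
    (E : Type v) [Field E] [Algebra F E]
    (hdE : algebraMap F E d ∉ valueSet p E
      (fun i : Fin n → Fin p => algebraMap F E (∏ r, a r ^ (i r : ℕ)))) :
    defect p E (fun j => algebraMap F E (Sum.elim
        (fun i : Fin n → Fin p => ∏ r, a r ^ (i r : ℕ)) (fun j : Fin t => d * s j) j)) =
      defect p E (fun i : Fin n → Fin p => algebraMap F E (∏ r, a r ^ (i r : ℕ))) +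
        defect p E (fun j : Fin t => algebraMap F E (s j)) := by
  have : CharP E p := charP_of_injective_algebraMap (algebraMap F E).injective p
  have hπ : (fun i : Fin n → Fin p => algebraMap F E (∏ r, a r ^ (i r : ℕ))) =
      quasiPfister p (fun r => algebraMap F E (a r)) := by
    ext i
    simp only [quasiPfister, map_prod, map_pow]
  have hφ : (fun j => algebraMap F E (Sum.elim
      (fun i : Fin n → Fin p => ∏ r, a r ^ (i r : ℕ)) (fun j : Fin t => d * s j) j)) =
      Sum.elim (quasiPfister p fun r => algebraMap F E (a r))
        (fun j => algebraMap F E d * algebraMap F E (s j)) := by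
    ext (i | j)
    · exact congrFun hπ i
    · exact map_mul _ _ _
  rw [hφ, hπ]
  rw [hπ] at hdE
  exact defect_quasiPfister_sumElim_eq_add _
    (fun j => hπ ▸ map_mem_valueSet (algebraMap F E) (hs j)) hdE

/-- If `φ = π ⊥ dσ` is anisotropic with `σ` a subform of the quasi-Pfister form `π`, and
`d ∉ D_E(π)`, then `i_d(φ_E) = i_d(π_E) + i_d(σ_E)`. -/
theorem defect_pfister_add_subform_of_not_mem (p : ℕ) [Fact p.Prime]
    (F : Type u) [Field F] [CharP F p]
    (n : ℕ) (a : Fin n → F) (t : ℕ) (ht : 1 ≤ t) (s : Fin t → F)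
    (hs : ∀ j, s j ∈ valueSet p F (fun i : Fin n → Fin p => ∏ r, a r ^ (i r : ℕ)))
    (d : F) (hd : d ≠ 0)
    (hφ : Anisotropic p F (Sum.elim (fun i : Fin n → Fin p => ∏ r, a r ^ (i r : ℕ))
      (fun j : Fin t => d * s j)))
    (E : Type v) [Field E] [Algebra F E]
    (hdE : algebraMap F E d ∉ valueSet p E
      (fun i : Fin n → Fin p => algebraMap F E (∏ r, a r ^ (i r : ℕ)))) :
    defect p E (fun j => algebraMap F E (Sum.elim
        (fun i : Fin n → Fin p => ∏ r, a r ^ (i r : ℕ)) (fun j : Fin t => d * s j) j)) =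
      defect p E (fun i : Fin n → Fin p => algebraMap F E (∏ r, a r ^ (i r : ℕ))) +
        defect p E (fun j : Fin t => algebraMap F E (s j)) :=
  defect_pfister_add_subform_of_not_mem_general p F n a t s hs d E hdE
end

section
/- Let F be a field of characteristic p > 0, and let φ = ⟨1,a₁,…,aₙ⟩ and ψ = ⟨1,b₁,…,b_m⟩ be diagonal quasilinear p-forms that are both anisotropic over F. Suppose [F^p(a₁,…,aₙ,b₁,…,b_m) : F^p] = [F^p(a₁,…,aₙ) : F^p] · [F^p(b₁,…,b_m) : F^p]. Then the tensor product φ ⊗ ψ, i.e., the diagonal form of dimension (n+1)(m+1) with coefficients aᵢbⱼ for 0 ≤ i ≤ n and 0 ≤ j ≤ m (where a₀ = b₀ = 1), is anisotropic over F. -/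
open scoped BigOperators

set_option synthInstance.maxHeartbeats 1000000
set_option maxHeartbeats 1000000

section aux

variable (p : ℕ) [Fact p.Prime] (F : Type*) [Field F] [CharP F p]

/-- `F^p` is the range of the Frobenius endomorphism. -/
lemma pPow_eq_fieldRange : pPow p F = (frobenius F p).fieldRange := by
  rw [pPow]
  have : (Set.range fun x : F => x ^ p) = ↑(frobenius F p).fieldRange := by
    ext y; simp [RingHom.mem_fieldRange, frobenius_def, eq_comm]
  rw [this, Subfield.closure_eq]

lemma mem_pPow_iff {y : F} : y ∈ pPow p F ↔ ∃ x : F, x ^ p = y := by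
  rw [pPow_eq_fieldRange]
  simp [RingHom.mem_fieldRange, frobenius_def]

/-- A diagonal quasilinear `p`-form is anisotropic iff its coefficients are
linearly independent over `F^p`. -/
lemma aniso_iff_li {ι : Type*} [Fintype ι] (c : ι → F) :
    Anisotropic p F c ↔ LinearIndependent (pPow p F) c := by
  have hp : p ≠ 0 := (Fact.out : p.Prime).ne_zero
  rw [Fintype.linearIndependent_iff]
  constructor
  · intro h g hg i
    choose x hx using fun i => (mem_pPow_iff p F).mp (g i).2
    have : ∑ i, c i * x i ^ p = 0 := by
      rw [← hg]; apply Finset.sum_congr rfl; intro i _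
      rw [hx i, Algebra.smul_def, mul_comm]
      rfl
    have hx0 := h x this
    ext
    rw [← hx i, congrFun hx0 i]
    simp [hp]
  · intro h x hx
    have : ∑ i, (⟨x i ^ p, (mem_pPow_iff p F).mpr ⟨x i, rfl⟩⟩ : pPow p F) • c i = 0 := by
      rw [← hx]; apply Finset.sum_congr rfl; intro i _
      simp [Subfield.smul_def, mul_comm]
    have := h _ this
    funext i
    have hi := this i
    rw [Subtype.ext_iff] at hi
    simpa [hp] using hi

end aux

/-- If `φ = ⟨1,a₁,…,aₙ⟩` and `ψ = ⟨1,b₁,…,b_m⟩` are anisotropic over `F` and the norm degree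
of `φ ⊗ ψ` is the product of those of `φ` and `ψ`, then `φ ⊗ ψ` is anisotropic over `F`. -/
theorem tensor_anisotropic_of_normDegree_mul (p : ℕ) [Fact p.Prime]
    (F : Type*) [Field F] [CharP F p]
    (n m : ℕ) (a : Fin n → F) (b : Fin m → F)
    (hφ : Anisotropic p F (Fin.cons (1 : F) a : Fin (n + 1) → F))
    (hψ : Anisotropic p F (Fin.cons (1 : F) b : Fin (m + 1) → F))
    (hdeg : pDeg p (Set.range a ∪ Set.range b) = pDeg p (Set.range a) * pDeg p (Set.range b)) :
    Anisotropic p F (fun ij : Fin (n + 1) × Fin (m + 1) =>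
      (Fin.cons (1 : F) a : Fin (n + 1) → F) ij.1 *
        (Fin.cons (1 : F) b : Fin (m + 1) → F) ij.2) := by
  unfold pDeg at hdeg
  set K := pPow p F
  have hp : 0 < p := (Fact.out : p.Prime).pos
  have hint : ∀ x : F, IsIntegral K x := by
    intro x
    refine IsIntegral.of_pow hp ?_
    have : x ^ p ∈ K := (mem_pPow_iff p F).mpr ⟨x, rfl⟩
    exact (isIntegral_algebraMap (x := (⟨x ^ p, this⟩ : K)) : IsIntegral K ((⟨x ^ p, this⟩ : K) : F))
  have : ∀ S : Set F, S.Finite → FiniteDimensional K (IntermediateField.adjoin K S) := by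
    intro S hS
    have := hS.to_subtype
    exact IntermediateField.finiteDimensional_adjoin fun x _ => hint x
  set A := IntermediateField.adjoin K (Set.range a)
  set B := IntermediateField.adjoin K (Set.range b)
  have hA : FiniteDimensional K A := this _ (Set.finite_range a)
  have hB : FiniteDimensional K B := this _ (Set.finite_range b)
  have hsup : IntermediateField.adjoin K (Set.range a ∪ Set.range b) = A ⊔ B := by
    rw [IntermediateField.adjoin_union]
  rw [hsup] at hdeg
  have hLD : A.LinearDisjoint B := IntermediateField.LinearDisjoint.of_finrank_sup hdeg
  -- lift the coefficient families into A and B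
  have hca : ∀ i : Fin (n + 1), (Fin.cons (1 : F) a : Fin (n + 1) → F) i ∈ A := by
    intro i
    refine Fin.cases ?_ ?_ i
    · simpa using one_mem A
    · intro j; simp only [Fin.cons_succ]
      exact IntermediateField.subset_adjoin _ _ ⟨j, rfl⟩
  have hcb : ∀ i : Fin (m + 1), (Fin.cons (1 : F) b : Fin (m + 1) → F) i ∈ B := by
    intro i
    refine Fin.cases ?_ ?_ i
    · simpa using one_mem B
    · intro j; simp only [Fin.cons_succ]
      exact IntermediateField.subset_adjoin _ _ ⟨j, rfl⟩
  set ca : Fin (n + 1) → A := fun i => ⟨_, hca i⟩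
  set cb : Fin (m + 1) → B := fun i => ⟨_, hcb i⟩
  have lia : LinearIndependent K ca := by
    have := (aniso_iff_li p F _).mp hφ
    exact this.of_comp A.val.toLinearMap
  have lib : LinearIndependent K cb := by
    have := (aniso_iff_li p F _).mp hψ
    exact this.of_comp B.val.toLinearMap
  have := hLD.linearIndependent_mul lia lib
  exact (aniso_iff_li p F _).mpr this
end

section
/- Let F be a field of characteristic p > 0 and φ = ⟨a₀,a₁,…,aₙ⟩ a diagonal quasilinear p-form over F with a₀ ≠ 0, and suppose [F^p(a₁/a₀,…,aₙ/a₀) : F^p] = p^k with k ≥ 1. Then there exist nonzero values d₀,d₁,…,d_k ∈ D_F(φ) such that {d₁/d₀,…,d_k/d₀} is p-independent over F; in other words, φ contains a subform similar to a minimal quasilinear p-form of dimension k+1. -/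
open scoped BigOperators

set_option synthInstance.maxHeartbeats 1000000
set_option maxHeartbeats 1000000

/-!
Adjoin the ratios `a i / a 0` to `F^p` greedily. Since every `p`-th power lies in the base, a
ratio outside the current field has degree exactly `p` over it (`X^p - y` is irreducible), so by
the tower law some `k` of the ratios already generate an extension of degree `p^k`. The
coefficients `a 0` and the `a i` of the chosen ratios are the required values of `φ`.
-/

open IntermediateField Polynomial Set

universe u

theorem finrank_adjoin_simple_of_pow_eq {K F : Type*} [Field K] [Field F] [Algebra K F]
    (p : ℕ) [Fact p.Prime] [CharP F p] {x : F} {y : K} (hy : algebraMap K F y = x ^ p)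
    (hx : x ∉ (⊥ : IntermediateField K F)) : Module.finrank K K⟮x⟯ = p := by
  have hp : p.Prime := Fact.out
  have hmonic := monic_X_pow_sub_C y hp.ne_zero
  have hroot : aeval x (X ^ p - C y) = 0 := by
    rw [map_sub, map_pow, aeval_X, aeval_C, hy, sub_self]
  have hirr : Irreducible (X ^ p - C y) :=
    X_pow_sub_C_irreducible_of_prime hp fun b hb =>
      hx <| mem_bot.2 ⟨b, frobenius_inj F p <| by
        rw [frobenius_def, frobenius_def, ← map_pow, hb, hy]⟩
  rw [adjoin.finrank ⟨_, hmonic, hroot⟩,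
    ← minpoly.eq_of_irreducible_of_monic hirr hroot hmonic, natDegree_X_pow_sub_C]

theorem finrank_adjoin_insert {K F : Type*} [Field K] [Field F] [Algebra K F] (x : F)
    (S : Set F) :
    Module.finrank K (adjoin K (insert x S)) =
      Module.finrank K K⟮x⟯ * Module.finrank K⟮x⟯ (adjoin K⟮x⟯ S) := by
  rw [insert_eq, ← adjoin_adjoin_left]
  exact (Module.finrank_mul_finrank K K⟮x⟯ (adjoin K⟮x⟯ S)).symm

theorem exists_subfamily_finrank_adjoin_eq_pow {F : Type u} [Field F] (p : ℕ) [Fact p.Prime]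
    [CharP F p] {ι : Type*} (c : ι → F) (k : ℕ) (K : Type u) [Field K] [Algebra K F]
    (hpow : ∀ x : F, x ^ p ∈ range (algebraMap K F))
    (hdeg : Module.finrank K (adjoin K (range c)) = p ^ k) :
    ∃ σ : Fin k → ι, (∀ j, c (σ j) ≠ 0) ∧
      Module.finrank K (adjoin K (range (c ∘ σ))) = p ^ k := by
  have hp : p.Prime := Fact.out
  induction k generalizing K with
  | zero =>
    refine ⟨Fin.elim0, fun j => j.elim0, ?_⟩
    rw [range_comp, range_eq_empty, image_empty, adjoin_empty, IntermediateField.finrank_bot,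
      pow_zero]
  | succ k ih =>
    obtain ⟨i, hi⟩ : ∃ i, c i ∉ (⊥ : IntermediateField K F) := by
      by_contra! h
      rw [adjoin_eq_bot_iff.2 (range_subset_iff.2 h), IntermediateField.finrank_bot] at hdeg
      exact (Nat.one_lt_pow k.succ_ne_zero hp.one_lt).ne hdeg
    obtain ⟨y, hy⟩ := hpow (c i)
    have hci : Module.finrank K K⟮c i⟯ = p := finrank_adjoin_simple_of_pow_eq p hy hi
    have hpow' : ∀ x : F, x ^ p ∈ range (algebraMap K⟮c i⟯ F) := fun x =>
      let ⟨y, hy⟩ := hpow x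
      ⟨⟨_, K⟮c i⟯.algebraMap_mem y⟩, hy⟩
    have hdeg' : Module.finrank K⟮c i⟯ (adjoin K⟮c i⟯ (range c)) = p ^ k := by
      have h := finrank_adjoin_insert (K := K) (c i) (range c)
      rw [insert_eq_of_mem (mem_range_self i), hdeg, hci, pow_succ'] at h
      exact (Nat.eq_of_mul_eq_mul_left hp.pos h).symm
    obtain ⟨σ, hσ0, hσ⟩ := ih K⟮c i⟯ hpow' hdeg'
    refine ⟨Fin.cons i σ, Fin.cases (fun h => hi (h ▸ zero_mem _)) hσ0, ?_⟩
    rw [range_comp, Fin.range_cons, image_insert_eq, ← range_comp, finrank_adjoin_insert, hci,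
      hσ, pow_succ']

theorem apply_mem_valueSet (p : ℕ) [NeZero p] {E : Type*} [Field E] {ι : Type*} [Fintype ι]
    [DecidableEq ι] (a : ι → E) (i : ι) : a i ∈ valueSet p E a :=
  ⟨Pi.single i 1, by simp [Pi.single_apply, zero_pow (NeZero.ne p)]⟩

theorem exists_minimal_subform_general (p : ℕ) [Fact p.Prime] (F : Type*) [Field F] [CharP F p]
    (n : ℕ) (a : Fin (n + 1) → F) (ha0 : a 0 ≠ 0) (k : ℕ)
    (hdeg : pDeg p (Set.range fun i : Fin n => a i.succ / a 0) = p ^ k) :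
    ∃ d : Fin (k + 1) → F,
      (∀ j, d j ∈ valueSet p F a) ∧ (∀ j, d j ≠ 0) ∧
        pIndep p (fun j : Fin k => d j.succ / d 0) := by
  have hpow : ∀ x : F, x ^ p ∈ range (algebraMap (pPow p F) F) :=
    fun x => ⟨⟨x ^ p, Subfield.subset_closure ⟨x, rfl⟩⟩, rfl⟩
  obtain ⟨σ, hσ0, hσ⟩ :=
    exists_subfamily_finrank_adjoin_eq_pow p (fun i : Fin n => a i.succ / a 0) k _ hpow hdeg
  refine ⟨Fin.cons (a 0) fun j => a (σ j).succ,
    Fin.cases (apply_mem_valueSet p a 0) fun j => apply_mem_valueSet p a _,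
    Fin.cases ha0 fun j h => hσ0 j (by rw [Fin.cons_succ] at h; rw [h, zero_div]), ?_⟩
  rw [pIndep, Fintype.card_fin]
  exact hσ

/-- If the norm degree of `φ = ⟨a₀,…,aₙ⟩` is `p^k` with `k ≥ 1`, then `φ` contains a subform
similar to a minimal `p`-form of dimension `k + 1`: there are nonzero values `d₀,…,d_k` of `φ`
with `{d₁/d₀,…,d_k/d₀}` `p`-independent over `F`. -/
theorem exists_minimal_subform (p : ℕ) [Fact p.Prime] (F : Type*) [Field F] [CharP F p]
    (n : ℕ) (a : Fin (n + 1) → F) (ha0 : a 0 ≠ 0) (k : ℕ) (hk : 1 ≤ k)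
    (hdeg : pDeg p (Set.range fun i : Fin n => a i.succ / a 0) = p ^ k) :
    ∃ d : Fin (k + 1) → F,
      (∀ j, d j ∈ valueSet p F a) ∧ (∀ j, d j ≠ 0) ∧
        pIndep p (fun j : Fin k => d j.succ / d 0) :=
  exists_minimal_subform_general p F n a ha0 k hdeg
end
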